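/- arXiv:2408.07688 — 2 statements merged into one kernel-verified Lean document; each statement's English description precedes it below -/
import Mathlib

section
/- Let φ : ℝ^d × P₂(ℝ^d) → ℝ be Lipschitz with respect to |·| × d_r, and for k ∈ ℕ define φ_k(x, μ) := Ẽ[ h_k(x, X̃₁,…,X̃_k) ] where X̃₁,…,X̃_k are i.i.d. with law μ and h_k(x₀,…,x_k) = ∫ φ( x₀ − y₀, (1/k)∑ᵢδ_{x_i−y_i} ) η_{1/k}(y₀)⋯η_{1/k}(y_k) dy₀⋯dy_k with η_ε the standard mollifier. Then each φ_k is Lipschitz with respect to |·| × d_r with Lipschitz constant depending only on the Lipschitz constant of φ (independent of k). -/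
open MeasureTheory
open scoped ENNReal

/-- The r-Wasserstein distance. -/
noncomputable def wassersteinDist {d : ℕ} (r : ℝ)
    (μ ν : Measure (EuclideanSpace ℝ (Fin d))) : ℝ :=
  sInf { c | ∃ γ : Measure (EuclideanSpace ℝ (Fin d) × EuclideanSpace ℝ (Fin d)),
    γ.map Prod.fst = μ ∧ γ.map Prod.snd = ν ∧
    c = (∫ p, dist p.1 p.2 ^ r ∂γ) ^ (1 / r) }

/-- A Borel probability measure with finite second moment. -/
def IsP2 {d : ℕ} (μ : Measure (EuclideanSpace ℝ (Fin d))) : Prop :=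
  IsProbabilityMeasure μ ∧ MemLp (fun x : EuclideanSpace ℝ (Fin d) => x) 2 μ

/-- The empirical measure `(1/k) ∑ᵢ δ_{x_i}`. -/
noncomputable def empiricalMeasure {d k : ℕ} (x : Fin k → EuclideanSpace ℝ (Fin d)) :
    Measure (EuclideanSpace ℝ (Fin d)) :=
  (k : ℝ≥0∞)⁻¹ • ∑ i, Measure.dirac (x i)

/-- The unnormalized standard bump `exp(1/(|x|²−1))` on the unit ball. -/
noncomputable def bump {d : ℕ} (x : EuclideanSpace ℝ (Fin d)) : ℝ :=
  if ‖x‖ < 1 then Real.exp (1 / (‖x‖ ^ 2 - 1)) else 0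

/-- The normalization constant of the standard mollifier. -/
noncomputable def bumpConst (d : ℕ) : ℝ := (∫ x, bump x ∂(volume : Measure (EuclideanSpace ℝ (Fin d))))⁻¹

/-- The standard mollifier `η_ε(x) = ε^{−d} η(x/ε)`, normalized to integrate to 1. -/
noncomputable def stdMollifier (d : ℕ) (ε : ℝ) (x : EuclideanSpace ℝ (Fin d)) : ℝ :=
  ε ^ (-(d : ℤ)) * bumpConst d * bump (ε⁻¹ • x)

/-- The mollified finite-dimensional projection
`h_{k,ε}(x₀,…,x_k) = ∫ φ(x₀−y₀, (1/k)∑δ_{x_i−y_i}) η_ε(y₀)⋯η_ε(y_k) dy`. -/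
noncomputable def mollifiedH (d k : ℕ) (ε : ℝ)
    (φ : EuclideanSpace ℝ (Fin d) → Measure (EuclideanSpace ℝ (Fin d)) → ℝ)
    (x₀ : EuclideanSpace ℝ (Fin d)) (xs : Fin k → EuclideanSpace ℝ (Fin d)) : ℝ :=
  ∫ y₀, (∫ ys : Fin k → EuclideanSpace ℝ (Fin d),
      (φ (x₀ - y₀) (empiricalMeasure fun i => xs i - ys i) *
        ∏ i, stdMollifier d ε (ys i)) ∂(Measure.pi fun _ => (volume : Measure (EuclideanSpace ℝ (Fin d))))) *
    stdMollifier d ε y₀ ∂(volume : Measure (EuclideanSpace ℝ (Fin d)))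

/-- The approximation `φ_k(x,μ) = Ẽ[h_{k,1/k}(x, X̃₁,…,X̃_k)]` where `X̃₁,…,X̃_k` are
i.i.d. with law `μ` (written as an integral against the product measure `μ^{⊗k}`). -/
noncomputable def mollifiedApprox (d k : ℕ)
    (φ : EuclideanSpace ℝ (Fin d) → Measure (EuclideanSpace ℝ (Fin d)) → ℝ)
    (x : EuclideanSpace ℝ (Fin d)) (μ : Measure (EuclideanSpace ℝ (Fin d))) : ℝ :=
  ∫ Xs : Fin k → EuclideanSpace ℝ (Fin d), mollifiedH d k (1 / k) φ x Xs
    ∂(Measure.pi fun _ => μ)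

namespace MollAux

variable {d : ℕ}

local notation "E" => EuclideanSpace ℝ (Fin d)

lemma bump_nonneg (x : E) : 0 ≤ bump x := by
  unfold bump; split_ifs <;> positivity

lemma bump_le_one (x : E) : bump x ≤ 1 := by
  unfold bump; split_ifs with h
  · rw [Real.exp_le_one_iff]
    apply div_nonpos_of_nonneg_of_nonpos one_pos.le
    nlinarith [norm_nonneg x]
  · norm_num

lemma bump_eq_zero {x : E} (h : 1 ≤ ‖x‖) : bump x = 0 := by
  unfold bump; rw [if_neg (not_lt.2 h)]

lemma measurable_bump : Measurable (bump : E → ℝ) := by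
  unfold bump
  exact Measurable.ite (measurableSet_lt measurable_norm measurable_const)
    (Real.measurable_exp.comp (measurable_const.div ((measurable_norm.pow_const 2).sub
      measurable_const))) measurable_const

lemma bump_le_indicator (x : E) :
    bump x ≤ (Metric.closedBall (0:E) 1).indicator (fun _ => (1:ℝ)) x := by
  by_cases h : ‖x‖ ≤ 1
  · rw [Set.indicator_of_mem (by simpa [Metric.mem_closedBall, dist_eq_norm] using h)]
    exact bump_le_one x
  · rw [Set.indicator_of_notMem (by simpa [Metric.mem_closedBall, dist_eq_norm] using h)]
    rw [bump_eq_zero (le_of_lt (not_le.1 h))]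

lemma integrable_bump : Integrable (bump : E → ℝ) volume := by
  refine Integrable.mono' (g := (Metric.closedBall (0:E) 1).indicator (fun _ => (1:ℝ)))
    ?_ measurable_bump.aestronglyMeasurable (Filter.Eventually.of_forall fun x => ?_)
  · exact (integrable_indicator_iff measurableSet_closedBall).2
      (integrableOn_const (measure_closedBall_lt_top).ne)
  · rw [Real.norm_eq_abs, abs_of_nonneg (bump_nonneg x)]
    exact bump_le_indicator x

lemma integral_bump_pos : 0 < ∫ x, bump x ∂(volume : Measure E) := by
  rw [integral_pos_iff_support_of_nonneg bump_nonneg integrable_bump]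
  have hsub : Metric.ball (0:E) 1 ⊆ Function.support bump := by
    intro x hx
    have : ‖x‖ < 1 := by simpa [Metric.mem_ball, dist_eq_norm] using hx
    simp only [Function.mem_support, bump, if_pos this]
    positivity
  calc 0 < volume (Metric.ball (0:E) 1) := Metric.measure_ball_pos _ _ one_pos
    _ ≤ _ := measure_mono hsub

lemma bumpConst_pos : 0 < bumpConst d := inv_pos.2 integral_bump_pos

lemma stdMollifier_nonneg {ε : ℝ} (hε : 0 < ε) (x : E) : 0 ≤ stdMollifier d ε x := by
  unfold stdMollifier
  have := bump_nonneg (ε⁻¹ • x)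
  have := (bumpConst_pos (d := d)).le
  positivity

lemma stdMollifier_eq_zero {ε : ℝ} (hε : 0 < ε) {x : E} (h : ε ≤ ‖x‖) :
    stdMollifier d ε x = 0 := by
  unfold stdMollifier
  rw [bump_eq_zero, mul_zero]
  rw [norm_smul, Real.norm_eq_abs, abs_of_nonneg (inv_nonneg.2 hε.le)]
  rw [← inv_mul_cancel₀ hε.ne']
  exact mul_le_mul_of_nonneg_left h (inv_nonneg.2 hε.le)

lemma measurable_stdMollifier (ε : ℝ) : Measurable (stdMollifier d ε) :=
  (measurable_bump.comp (measurable_const_smul _)).const_mul _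

lemma stdMollifier_le {ε : ℝ} (hε : 0 < ε) (x : E) :
    stdMollifier d ε x ≤ ε ^ (-(d:ℤ)) * bumpConst d := by
  unfold stdMollifier
  calc ε ^ (-(d:ℤ)) * bumpConst d * bump (ε⁻¹ • x) ≤ ε ^ (-(d:ℤ)) * bumpConst d * 1 := by
        apply mul_le_mul_of_nonneg_left (bump_le_one _)
        have := (bumpConst_pos (d := d)).le; positivity
    _ = _ := mul_one _

lemma integrable_stdMollifier {ε : ℝ} (hε : 0 < ε) : Integrable (stdMollifier d ε) volume := by
  refine Integrable.mono' (g := fun x => (ε ^ (-(d:ℤ)) * bumpConst d) *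
      (Metric.closedBall (0:E) ε).indicator (fun _ => (1:ℝ)) x) ?_
    (measurable_stdMollifier ε).aestronglyMeasurable
    (Filter.Eventually.of_forall fun x => ?_)
  · exact ((integrable_indicator_iff measurableSet_closedBall).2
      (integrableOn_const measure_closedBall_lt_top.ne)).const_mul _
  · rw [Real.norm_eq_abs, abs_of_nonneg (stdMollifier_nonneg hε x)]
    by_cases h : ‖x‖ ≤ ε
    · rw [Set.indicator_of_mem (by simpa [Metric.mem_closedBall, dist_eq_norm] using h), mul_one]
      exact stdMollifier_le hε x
    · rw [Set.indicator_of_notMem (by simpa [Metric.mem_closedBall, dist_eq_norm] using h),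
        mul_zero, stdMollifier_eq_zero hε (le_of_lt (not_le.1 h))]

lemma integral_stdMollifier {ε : ℝ} (hε : 0 < ε) :
    ∫ x, stdMollifier d ε x ∂(volume : Measure E) = 1 := by
  unfold stdMollifier
  rw [integral_const_mul]
  have := Measure.integral_comp_smul (volume : Measure E) (bump : E → ℝ) ε⁻¹
  rw [this, finrank_euclideanSpace_fin]
  rw [smul_eq_mul, inv_pow, inv_inv, abs_of_nonneg (by positivity)]
  rw [zpow_neg, zpow_natCast]
  rw [bumpConst]
  have h1 : (ε:ℝ) ^ d ≠ 0 := by positivity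
  have h2 : (∫ (x : E), bump x) ≠ 0 := (integral_bump_pos (d:=d)).ne'
  field_simp

end MollAux


namespace MollAux2

variable {d k : ℕ} {r : ℝ}

local notation "E" => EuclideanSpace ℝ (Fin d)
open MollAux

-- product mollifier
lemma measurable_prodMollifier (ε : ℝ) :
    Measurable (fun ys : Fin k → E => ∏ i, stdMollifier d ε (ys i)) :=
  Finset.measurable_prod _ fun i _ => (measurable_stdMollifier ε).comp (measurable_pi_apply i)

lemma prodMollifier_nonneg {ε : ℝ} (hε : 0 < ε) (ys : Fin k → E) :
    0 ≤ ∏ i, stdMollifier d ε (ys i) :=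
  Finset.prod_nonneg fun i _ => stdMollifier_nonneg hε _

lemma integrable_prodMollifier {ε : ℝ} (hε : 0 < ε) :
    Integrable (fun ys : Fin k → E => ∏ i, stdMollifier d ε (ys i))
      (Measure.pi fun _ => (volume : Measure E)) := by
  set B : ℝ := ε ^ (-(d:ℤ)) * bumpConst d with hB
  have hB0 : 0 ≤ B := by have := (bumpConst_pos (d := d)).le; positivity
  set S : Set (Fin k → E) := Set.univ.pi fun _ => Metric.closedBall (0:E) ε with hS
  have hSm : MeasurableSet S := MeasurableSet.univ_pi fun _ => measurableSet_closedBall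
  have hSvol : (Measure.pi fun _ : Fin k => (volume : Measure E)) S < ⊤ := by
    rw [hS, Measure.pi_pi]
    exact ENNReal.prod_lt_top fun i _ => (measure_closedBall_lt_top (x := (0:E)) (r := ε))
  refine Integrable.mono' (g := fun ys => B ^ k * S.indicator (fun _ => (1:ℝ)) ys)
    ?_ (measurable_prodMollifier ε).aestronglyMeasurable
    (Filter.Eventually.of_forall fun ys => ?_)
  · exact ((integrable_indicator_iff hSm).2 (integrableOn_const hSvol.ne)).const_mul _
  · rw [Real.norm_eq_abs, abs_of_nonneg (prodMollifier_nonneg hε ys)]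
    by_cases h : ys ∈ S
    · rw [Set.indicator_of_mem h, mul_one]
      calc ∏ i, stdMollifier d ε (ys i) ≤ ∏ _i : Fin k, B :=
            Finset.prod_le_prod (fun i _ => stdMollifier_nonneg hε _)
              (fun i _ => stdMollifier_le hε _)
        _ = B ^ k := by rw [Finset.prod_const, Finset.card_univ, Fintype.card_fin]
    · rw [Set.indicator_of_notMem h, mul_zero]
      have hex : ∃ i, ¬ ‖ys i‖ ≤ ε := by
        by_contra hc
        push_neg at hc
        exact h (Set.mem_univ_pi.2 fun i => by
          simpa [Metric.mem_closedBall, dist_eq_norm] using hc i)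
      obtain ⟨i, hi⟩ := hex
      rw [Finset.prod_eq_zero (Finset.mem_univ i) (stdMollifier_eq_zero hε (not_le.1 hi).le)]

lemma integral_prodMollifier {ε : ℝ} (hε : 0 < ε) :
    ∫ ys : Fin k → E, (∏ i, stdMollifier d ε (ys i))
      ∂(Measure.pi fun _ => (volume : Measure E)) = 1 := by
  have h := integral_fintype_prod_eq_prod (𝕜 := ℝ) (ι := Fin k)
    (fun _ (y : E) => stdMollifier d ε y) (μ := fun _ => (volume : Measure E))
  rw [h]
  simp [integral_stdMollifier hε]

-- empirical measure facts
lemma empirical_isProbability (hk : 0 < k) (x : Fin k → E) :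
    IsProbabilityMeasure (empiricalMeasure x) := by
  constructor
  rw [empiricalMeasure, Measure.smul_apply, Measure.coe_finset_sum, Finset.sum_apply]
  simp only [Measure.dirac_apply' _ MeasurableSet.univ, Set.indicator_of_mem (Set.mem_univ _),
    Pi.one_apply]
  rw [Finset.sum_const, Finset.card_univ, Fintype.card_fin, nsmul_eq_mul, mul_one, smul_eq_mul]
  exact ENNReal.inv_mul_cancel (by exact_mod_cast Nat.cast_ne_zero.2 hk.ne') (ENNReal.natCast_ne_top k)

lemma isP2_empirical (hk : 0 < k) (x : Fin k → E) : IsP2 (empiricalMeasure x) := by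
  haveI := empirical_isProbability hk x
  refine ⟨inferInstance, ?_⟩
  have hne : (Finset.univ : Finset (Fin k)).Nonempty := Finset.univ_nonempty_iff.2 ⟨⟨0, hk⟩⟩
  set C : ℝ := Finset.univ.sup' hne fun i => ‖x i‖ with hC
  refine MemLp.of_bound measurable_id.aestronglyMeasurable C ?_
  rw [ae_iff]
  have : {a : E | ¬ ‖id a‖ ≤ C} ⊆ {a : E | C < ‖a‖} := fun a ha => not_le.1 ha
  refine measure_mono_null this ?_
  have hm : MeasurableSet {a : E | C < ‖a‖} := measurableSet_lt measurable_const measurable_norm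
  rw [empiricalMeasure, Measure.smul_apply, Measure.coe_finset_sum, Finset.sum_apply]
  have : ∀ i : Fin k, Measure.dirac (x i) {a : E | C < ‖a‖} = 0 := by
    intro i
    rw [Measure.dirac_apply' _ hm, Set.indicator_of_notMem]
    simp only [Set.mem_setOf_eq, not_lt]
    exact Finset.le_sup' (fun j => ‖x j‖) (Finset.mem_univ i)
  simp [this]

lemma wassersteinDist_nonneg (μ ν : Measure E) : 0 ≤ wassersteinDist r μ ν := by
  apply Real.sInf_nonneg
  rintro z ⟨γ, -, -, rfl⟩
  exact Real.rpow_nonneg (integral_nonneg fun p => Real.rpow_nonneg dist_nonneg r) _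

lemma wasserstein_bddBelow (μ ν : Measure E) :
    BddBelow { c | ∃ γ : Measure (E × E),
      γ.map Prod.fst = μ ∧ γ.map Prod.snd = ν ∧
      c = (∫ p, dist p.1 p.2 ^ r ∂γ) ^ (1 / r) } := by
  refine ⟨0, ?_⟩
  rintro z ⟨γ, -, -, rfl⟩
  exact Real.rpow_nonneg (integral_nonneg fun p => Real.rpow_nonneg dist_nonneg r) _

lemma integrable_dirac_real {α : Type*} [MeasurableSpace α] {f : α → ℝ}
    (hf : Measurable f) (a : α) : Integrable f (Measure.dirac a) := by
  refine ⟨hf.aestronglyMeasurable, ?_⟩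
  unfold HasFiniteIntegral
  rw [lintegral_dirac' a (by exact hf.nnnorm.coe_nnreal_ennreal)]
  exact ENNReal.coe_lt_top

lemma map_sum_dirac {α β : Type*} [MeasurableSpace α] [MeasurableSpace β] {f : α → β}
    (hf : Measurable f) {ι : Type*} (s : Finset ι) (g : ι → α) :
    Measure.map f (∑ i ∈ s, Measure.dirac (g i)) = ∑ i ∈ s, Measure.dirac (f (g i)) := by
  classical
  induction s using Finset.induction with
  | empty => simp
  | insert _ _ h ih =>
    rw [Finset.sum_insert h, Measure.map_add _ _ hf, Measure.map_dirac' hf, ih, Finset.sum_insert h]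

lemma wassersteinDist_empirical_le (hk : 0 < k) (hr1 : 1 ≤ r) (a b : Fin k → E) :
    wassersteinDist r (empiricalMeasure a) (empiricalMeasure b) ≤
      ((k:ℝ)⁻¹ * ∑ i, dist (a i) (b i) ^ r) ^ (1 / r) := by
  set γ : Measure (E × E) := (k : ℝ≥0∞)⁻¹ • ∑ i, Measure.dirac (a i, b i) with hγ
  have hfst : γ.map Prod.fst = empiricalMeasure a := by
    rw [hγ, Measure.map_smul, map_sum_dirac measurable_fst, empiricalMeasure]
  have hsnd : γ.map Prod.snd = empiricalMeasure b := by
    rw [hγ, Measure.map_smul, map_sum_dirac measurable_snd, empiricalMeasure]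
  have hmeas : Measurable fun p : E × E => dist p.1 p.2 ^ r :=
    (measurable_fst.dist measurable_snd).pow_const r
  have hcost : (∫ p, dist p.1 p.2 ^ r ∂γ) = (k:ℝ)⁻¹ * ∑ i, dist (a i) (b i) ^ r := by
    rw [hγ, integral_smul_measure,
      integral_finset_sum_measure (fun i _ => integrable_dirac_real hmeas _)]
    simp only [integral_dirac' _ _ hmeas.stronglyMeasurable]
    rw [smul_eq_mul, ENNReal.toReal_inv]
    simp
  apply csInf_le (wasserstein_bddBelow _ _)
  exact ⟨γ, hfst, hsnd, by rw [hcost]⟩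

end MollAux2


namespace MollAux3

open MollAux MollAux2

variable {d k : ℕ} {r L ε : ℝ}
  {φ : EuclideanSpace ℝ (Fin d) → Measure (EuclideanSpace ℝ (Fin d)) → ℝ}

local notation "E" => EuclideanSpace ℝ (Fin d)

lemma rpow_le_one_add {t : ℝ} (ht : 0 ≤ t) {p : ℝ} (hp0 : 0 < p) (hp1 : p ≤ 1) :
    t ^ p ≤ 1 + t := by
  rcases le_or_gt t 1 with h | h
  · calc t ^ p ≤ 1 ^ p := Real.rpow_le_rpow ht h hp0.le
      _ = 1 := Real.one_rpow p
      _ ≤ 1 + t := by linarith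
  · calc t ^ p ≤ t ^ (1:ℝ) := Real.rpow_le_rpow_of_exponent_le h.le hp1
      _ = t := Real.rpow_one t
      _ ≤ 1 + t := by linarith

lemma jensen_rpow {α : Type*} [MeasurableSpace α] (μ : Measure α) [IsProbabilityMeasure μ]
    {f : α → ℝ} {p : ℝ} (hp0 : 0 < p) (hp1 : p ≤ 1) (hf : Integrable f μ)
    (hf0 : ∀ x, 0 ≤ f x) (hfp : Integrable (fun x => f x ^ p) μ) :
    ∫ x, f x ^ p ∂μ ≤ (∫ x, f x ∂μ) ^ p := by
  rcases eq_or_lt_of_le hp1 with hp | hp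
  · rw [hp]; simp [Real.rpow_one]
  · have hcon : ConcaveOn ℝ (Set.Ici 0) (fun t : ℝ => t ^ p) :=
      (Real.strictConcaveOn_rpow hp0 hp).concaveOn
    have hcont : ContinuousOn (fun t : ℝ => t ^ p) (Set.Ici 0) := fun t _ =>
      (Real.continuousAt_rpow_const t p (Or.inr hp0.le)).continuousWithinAt
    exact hcon.le_map_integral hcont isClosed_Ici (Filter.Eventually.of_forall hf0) hf hfp

lemma avg_rpow_nonneg (f : Fin k → ℝ) (hf0 : ∀ i, 0 ≤ f i) :
    0 ≤ ((k:ℝ)⁻¹ * ∑ i, f i ^ r) ^ (1/r) :=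
  Real.rpow_nonneg (mul_nonneg (inv_nonneg.2 (Nat.cast_nonneg k))
    (Finset.sum_nonneg fun i _ => Real.rpow_nonneg (hf0 i) r)) _

lemma avg_rpow_le_of_le (hk : 0 < k) (hr1 : 1 ≤ r) {c : ℝ} (hc : 0 ≤ c) {f : Fin k → ℝ}
    (hf0 : ∀ i, 0 ≤ f i) (hf : ∀ i, f i ≤ c) :
    ((k:ℝ)⁻¹ * ∑ i, f i ^ r) ^ (1/r) ≤ c := by
  have hr0 : (0:ℝ) < r := lt_of_lt_of_le one_pos hr1
  have hk0 : (0:ℝ) < (k:ℝ) := by exact_mod_cast hk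
  have h2 : (k:ℝ)⁻¹ * ∑ i, f i ^ r ≤ c ^ r := by
    have hsum : ∑ i, f i ^ r ≤ (k:ℝ) * c ^ r := by
      calc ∑ i, f i ^ r ≤ ∑ _i : Fin k, c ^ r :=
            Finset.sum_le_sum fun i _ => Real.rpow_le_rpow (hf0 i) (hf i) hr0.le
        _ = (k:ℝ) * c ^ r := by
            rw [Finset.sum_const, Finset.card_univ, Fintype.card_fin, nsmul_eq_mul]
    calc (k:ℝ)⁻¹ * ∑ i, f i ^ r ≤ (k:ℝ)⁻¹ * ((k:ℝ) * c ^ r) :=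
          mul_le_mul_of_nonneg_left hsum (inv_nonneg.2 hk0.le)
      _ = c ^ r := by field_simp
  calc ((k:ℝ)⁻¹ * ∑ i, f i ^ r) ^ (1/r) ≤ (c ^ r) ^ (1/r) := by
        exact Real.rpow_le_rpow (mul_nonneg (inv_nonneg.2 (Nat.cast_nonneg k))
          (Finset.sum_nonneg fun i _ => Real.rpow_nonneg (hf0 i) r)) h2 (by positivity)
    _ = c := by
        rw [← Real.rpow_mul hc, mul_one_div_cancel hr0.ne', Real.rpow_one]

lemma avg_rpow_dist_le (hk : 0 < k) (hr1 : 1 ≤ r) (p q : Fin k → E) :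
    ((k:ℝ)⁻¹ * ∑ i, dist (p i) (q i) ^ r) ^ (1/r) ≤ dist p q :=
  avg_rpow_le_of_le hk hr1 dist_nonneg (fun _ => dist_nonneg)
    (fun i => dist_le_pi_dist p q i)

lemma avg_rpow_self (hk : 0 < k) (hr1 : 1 ≤ r) (p : Fin k → E) :
    ((k:ℝ)⁻¹ * ∑ i, dist (p i) (p i) ^ r) ^ (1/r) = 0 := by
  have hr0 : (0:ℝ) < r := lt_of_lt_of_le one_pos hr1
  simp [Real.zero_rpow hr0.ne', one_div, Real.zero_rpow (inv_ne_zero hr0.ne')]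

lemma phi_pair_bound
    (hφ : ∀ x y : E, ∀ μ ν : Measure E, IsP2 μ → IsP2 ν →
      |φ x μ - φ y ν| ≤ L * (dist x y + wassersteinDist r μ ν))
    (hk : 0 < k) (hr1 : 1 ≤ r) (u v : E) (p q : Fin k → E) :
    |φ u (empiricalMeasure p) - φ v (empiricalMeasure q)| ≤
      |L| * (dist u v + ((k:ℝ)⁻¹ * ∑ i, dist (p i) (q i) ^ r) ^ (1/r)) := by
  have h1 := hφ u v _ _ (isP2_empirical hk p) (isP2_empirical hk q)
  have hW0 : 0 ≤ wassersteinDist r (empiricalMeasure p) (empiricalMeasure q) :=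
    wassersteinDist_nonneg _ _
  calc |φ u (empiricalMeasure p) - φ v (empiricalMeasure q)|
      ≤ L * (dist u v + wassersteinDist r (empiricalMeasure p) (empiricalMeasure q)) := h1
    _ ≤ |L| * (dist u v + wassersteinDist r (empiricalMeasure p) (empiricalMeasure q)) :=
        mul_le_mul_of_nonneg_right (le_abs_self L) (by positivity)
    _ ≤ |L| * (dist u v + ((k:ℝ)⁻¹ * ∑ i, dist (p i) (q i) ^ r) ^ (1/r)) :=
        mul_le_mul_of_nonneg_left
          (add_le_add_right (wassersteinDist_empirical_le hk hr1 p q) _) (abs_nonneg L)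

lemma phi_part_continuous
    (hφ : ∀ x y : E, ∀ μ ν : Measure E, IsP2 μ → IsP2 ν →
      |φ x μ - φ y ν| ≤ L * (dist x y + wassersteinDist r μ ν))
    (hk : 0 < k) (hr1 : 1 ≤ r) (u : E) (a : Fin k → E) :
    Continuous (fun ys : Fin k → E => φ u (empiricalMeasure fun i => a i - ys i)) := by
  apply LipschitzWith.continuous (K := Real.toNNReal |L|)
  apply LipschitzWith.of_dist_le_mul
  intro ys zs
  rw [Real.coe_toNNReal _ (abs_nonneg L), Real.dist_eq]
  calc |φ u (empiricalMeasure fun i => a i - ys i) - φ u (empiricalMeasure fun i => a i - zs i)|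
      ≤ |L| * (dist u u + ((k:ℝ)⁻¹ * ∑ i, dist (a i - ys i) (a i - zs i) ^ r) ^ (1/r)) :=
        phi_pair_bound hφ hk hr1 u u _ _
    _ ≤ |L| * dist ys zs := by
        rw [dist_self, zero_add]
        apply mul_le_mul_of_nonneg_left ?_ (abs_nonneg L)
        simp only [dist_sub_left]
        exact avg_rpow_dist_le hk hr1 ys zs

/-- bound on the φ part over the support of the product mollifier. -/
lemma phi_part_bound
    (hφ : ∀ x y : E, ∀ μ ν : Measure E, IsP2 μ → IsP2 ν →
      |φ x μ - φ y ν| ≤ L * (dist x y + wassersteinDist r μ ν))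
    (hk : 0 < k) (hε : 0 < ε) (hr1 : 1 ≤ r) (u : E) (a : Fin k → E)
    {ys : Fin k → E} (hys : ∀ i, ‖ys i‖ ≤ ε) :
    |φ u (empiricalMeasure fun i => a i - ys i)| ≤ |φ u (empiricalMeasure a)| + |L| * ε := by
  have h1 : |φ u (empiricalMeasure fun i => a i - ys i) - φ u (empiricalMeasure a)|
      ≤ |L| * (dist u u + ((k:ℝ)⁻¹ * ∑ i, dist (a i - ys i) (a i) ^ r) ^ (1/r)) :=
    phi_pair_bound hφ hk hr1 u u _ a
  rw [dist_self, zero_add] at h1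
  have h2 : ((k:ℝ)⁻¹ * ∑ i, dist (a i - ys i) (a i) ^ r) ^ (1/r) ≤ ε := by
    apply avg_rpow_le_of_le hk hr1 hε.le (fun _ => dist_nonneg)
    intro i
    rw [dist_eq_norm]
    simpa using hys i
  calc |φ u (empiricalMeasure fun i => a i - ys i)|
      ≤ |φ u (empiricalMeasure fun i => a i - ys i) - φ u (empiricalMeasure a)|
        + |φ u (empiricalMeasure a)| := by
          have := abs_sub_abs_le_abs_sub (φ u (empiricalMeasure fun i => a i - ys i))
            (φ u (empiricalMeasure a))
          linarith [abs_nonneg (φ u (empiricalMeasure a))]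
    _ ≤ |L| * ε + |φ u (empiricalMeasure a)| := by
        have := mul_le_mul_of_nonneg_left h2 (abs_nonneg L)
        linarith
    _ = _ := by ring

lemma inner_integrable
    (hφ : ∀ x y : E, ∀ μ ν : Measure E, IsP2 μ → IsP2 ν →
      |φ x μ - φ y ν| ≤ L * (dist x y + wassersteinDist r μ ν))
    (hk : 0 < k) (hε : 0 < ε) (hr1 : 1 ≤ r) (u : E) (a : Fin k → E) :
    Integrable (fun ys : Fin k → E => φ u (empiricalMeasure fun i => a i - ys i) *
      ∏ i, stdMollifier d ε (ys i)) (Measure.pi fun _ => (volume : Measure E)) := by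
  refine Integrable.mono' (g := fun ys => (|φ u (empiricalMeasure a)| + |L| * ε) *
      ∏ i, stdMollifier d ε (ys i))
    ((integrable_prodMollifier hε).const_mul _)
    ((phi_part_continuous hφ hk hr1 u a).aestronglyMeasurable.mul
      (measurable_prodMollifier ε).aestronglyMeasurable)
    (Filter.Eventually.of_forall fun ys => ?_)
  rw [Real.norm_eq_abs, abs_mul, abs_of_nonneg (prodMollifier_nonneg hε ys)]
  by_cases h : ∀ i, ‖ys i‖ ≤ ε
  · exact mul_le_mul_of_nonneg_right (phi_part_bound hφ hk hε hr1 u a h)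
      (prodMollifier_nonneg hε ys)
  · push_neg at h
    obtain ⟨i, hi⟩ := h
    rw [Finset.prod_eq_zero (Finset.mem_univ i) (stdMollifier_eq_zero hε hi.le), mul_zero]
    exact mul_nonneg (by positivity) le_rfl

lemma inner_diff_le
    (hφ : ∀ x y : E, ∀ μ ν : Measure E, IsP2 μ → IsP2 ν →
      |φ x μ - φ y ν| ≤ L * (dist x y + wassersteinDist r μ ν))
    (hk : 0 < k) (hε : 0 < ε) (hr1 : 1 ≤ r) (u v : E) (a b : Fin k → E) :
    |(∫ ys : Fin k → E, φ u (empiricalMeasure fun i => a i - ys i) *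
        ∏ i, stdMollifier d ε (ys i) ∂(Measure.pi fun _ => (volume : Measure E))) -
      (∫ ys : Fin k → E, φ v (empiricalMeasure fun i => b i - ys i) *
        ∏ i, stdMollifier d ε (ys i) ∂(Measure.pi fun _ => (volume : Measure E)))| ≤
      |L| * (dist u v + ((k:ℝ)⁻¹ * ∑ i, dist (a i) (b i) ^ r) ^ (1/r)) := by
  set D : ℝ := dist u v + ((k:ℝ)⁻¹ * ∑ i, dist (a i) (b i) ^ r) ^ (1/r) with hD
  have hD0 : 0 ≤ D := add_nonneg dist_nonneg
    (avg_rpow_nonneg _ fun _ => dist_nonneg)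
  rw [← integral_sub (inner_integrable hφ hk hε hr1 u a) (inner_integrable hφ hk hε hr1 v b)]
  have habs := norm_integral_le_integral_norm (μ := Measure.pi fun _ => (volume : Measure E))
    (f := fun ys : Fin k → E => φ u (empiricalMeasure fun i => a i - ys i) *
        (∏ i, stdMollifier d ε (ys i)) -
      φ v (empiricalMeasure fun i => b i - ys i) * ∏ i, stdMollifier d ε (ys i))
  rw [Real.norm_eq_abs] at habs
  refine le_trans habs ?_
  have hpt : ∀ ys : Fin k → E,
      ‖φ u (empiricalMeasure fun i => a i - ys i) * (∏ i, stdMollifier d ε (ys i)) -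
        φ v (empiricalMeasure fun i => b i - ys i) * ∏ i, stdMollifier d ε (ys i)‖ ≤
      (|L| * D) * ∏ i, stdMollifier d ε (ys i) := by
    intro ys
    rw [← sub_mul, Real.norm_eq_abs, abs_mul, abs_of_nonneg (prodMollifier_nonneg hε ys)]
    apply mul_le_mul_of_nonneg_right ?_ (prodMollifier_nonneg hε ys)
    calc |φ u (empiricalMeasure fun i => a i - ys i) -
          φ v (empiricalMeasure fun i => b i - ys i)|
        ≤ |L| * (dist u v + ((k:ℝ)⁻¹ * ∑ i, dist (a i - ys i) (b i - ys i) ^ r) ^ (1/r)) :=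
          phi_pair_bound hφ hk hr1 u v _ _
      _ = |L| * D := by simp only [dist_sub_right, hD]
  calc ∫ ys : Fin k → E, ‖φ u (empiricalMeasure fun i => a i - ys i) *
          (∏ i, stdMollifier d ε (ys i)) -
        φ v (empiricalMeasure fun i => b i - ys i) * ∏ i, stdMollifier d ε (ys i)‖
        ∂(Measure.pi fun _ => (volume : Measure E))
      ≤ ∫ ys : Fin k → E, (|L| * D) * ∏ i, stdMollifier d ε (ys i)
        ∂(Measure.pi fun _ => (volume : Measure E)) := by
        apply integral_mono ?_ ((integrable_prodMollifier hε).const_mul _) hpt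
        exact ((inner_integrable hφ hk hε hr1 u a).sub (inner_integrable hφ hk hε hr1 v b)).norm
    _ = |L| * D := by
        rw [integral_const_mul, integral_prodMollifier hε, mul_one]

end MollAux3


namespace MollAux4

open MollAux MollAux2 MollAux3

variable {d k : ℕ} {r L ε : ℝ}
  {φ : EuclideanSpace ℝ (Fin d) → Measure (EuclideanSpace ℝ (Fin d)) → ℝ}

local notation "E" => EuclideanSpace ℝ (Fin d)

/-- Inner integral as a function of the first argument of `φ`. -/
noncomputable def innerInt (d k : ℕ) (ε : ℝ)
    (φ : EuclideanSpace ℝ (Fin d) → Measure (EuclideanSpace ℝ (Fin d)) → ℝ)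
    (u : EuclideanSpace ℝ (Fin d)) (a : Fin k → EuclideanSpace ℝ (Fin d)) : ℝ :=
  ∫ ys : Fin k → EuclideanSpace ℝ (Fin d),
    φ u (empiricalMeasure fun i => a i - ys i) * ∏ i, stdMollifier d ε (ys i)
    ∂(Measure.pi fun _ => (volume : Measure (EuclideanSpace ℝ (Fin d))))

lemma mollifiedH_eq (x : E) (a : Fin k → E) :
    mollifiedH d k ε φ x a =
      ∫ y₀, innerInt d k ε φ (x - y₀) a * stdMollifier d ε y₀ ∂(volume : Measure E) := rfl

lemma innerInt_diff_le
    (hφ : ∀ x y : E, ∀ μ ν : Measure E, IsP2 μ → IsP2 ν →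
      |φ x μ - φ y ν| ≤ L * (dist x y + wassersteinDist r μ ν))
    (hk : 0 < k) (hε : 0 < ε) (hr1 : 1 ≤ r) (u v : E) (a b : Fin k → E) :
    |innerInt d k ε φ u a - innerInt d k ε φ v b| ≤
      |L| * (dist u v + ((k:ℝ)⁻¹ * ∑ i, dist (a i) (b i) ^ r) ^ (1/r)) :=
  inner_diff_le hφ hk hε hr1 u v a b

lemma innerInt_self_diff_le
    (hφ : ∀ x y : E, ∀ μ ν : Measure E, IsP2 μ → IsP2 ν →
      |φ x μ - φ y ν| ≤ L * (dist x y + wassersteinDist r μ ν))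
    (hk : 0 < k) (hε : 0 < ε) (hr1 : 1 ≤ r) (u v : E) (a : Fin k → E) :
    |innerInt d k ε φ u a - innerInt d k ε φ v a| ≤ |L| * dist u v := by
  have := innerInt_diff_le hφ hk hε hr1 u v a a
  rwa [avg_rpow_self hk hr1, add_zero] at this

lemma innerInt_continuous
    (hφ : ∀ x y : E, ∀ μ ν : Measure E, IsP2 μ → IsP2 ν →
      |φ x μ - φ y ν| ≤ L * (dist x y + wassersteinDist r μ ν))
    (hk : 0 < k) (hε : 0 < ε) (hr1 : 1 ≤ r) (a : Fin k → E) :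
    Continuous (fun u : E => innerInt d k ε φ u a) := by
  apply LipschitzWith.continuous (K := Real.toNNReal |L|)
  apply LipschitzWith.of_dist_le_mul
  intro u v
  rw [Real.coe_toNNReal _ (abs_nonneg L), Real.dist_eq]
  exact innerInt_self_diff_le hφ hk hε hr1 u v a

lemma outer_integrable
    (hφ : ∀ x y : E, ∀ μ ν : Measure E, IsP2 μ → IsP2 ν →
      |φ x μ - φ y ν| ≤ L * (dist x y + wassersteinDist r μ ν))
    (hk : 0 < k) (hε : 0 < ε) (hr1 : 1 ≤ r) (x : E) (a : Fin k → E) :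
    Integrable (fun y₀ : E => innerInt d k ε φ (x - y₀) a * stdMollifier d ε y₀)
      (volume : Measure E) := by
  refine Integrable.mono' (g := fun y₀ => (|innerInt d k ε φ x a| + |L| * ε) *
      stdMollifier d ε y₀)
    ((integrable_stdMollifier hε).const_mul _)
    (((innerInt_continuous hφ hk hε hr1 a).comp (continuous_const.sub
      continuous_id)).aestronglyMeasurable.mul
      (measurable_stdMollifier ε).aestronglyMeasurable)
    (Filter.Eventually.of_forall fun y₀ => ?_)
  rw [Real.norm_eq_abs, abs_mul, abs_of_nonneg (stdMollifier_nonneg hε y₀)]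
  by_cases h : ‖y₀‖ ≤ ε
  · apply mul_le_mul_of_nonneg_right ?_ (stdMollifier_nonneg hε y₀)
    have h1 := innerInt_self_diff_le hφ hk hε hr1 (x - y₀) x a
    have h2 : dist (x - y₀) x = ‖y₀‖ := by
      rw [dist_eq_norm, sub_sub_cancel_left, norm_neg]
    have h3 : |innerInt d k ε φ (x - y₀) a| - |innerInt d k ε φ x a| ≤ |L| * ε := by
      calc |innerInt d k ε φ (x - y₀) a| - |innerInt d k ε φ x a|
          ≤ |innerInt d k ε φ (x - y₀) a - innerInt d k ε φ x a| := abs_sub_abs_le_abs_sub _ _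
        _ ≤ |L| * dist (x - y₀) x := h1
        _ = |L| * ‖y₀‖ := by rw [h2]
        _ ≤ |L| * ε := mul_le_mul_of_nonneg_left h (abs_nonneg L)
    linarith
  · rw [stdMollifier_eq_zero hε (not_le.1 h).le, mul_zero]
    exact mul_nonneg (by positivity) le_rfl

lemma mollifiedH_diff_le
    (hφ : ∀ x y : E, ∀ μ ν : Measure E, IsP2 μ → IsP2 ν →
      |φ x μ - φ y ν| ≤ L * (dist x y + wassersteinDist r μ ν))
    (hk : 0 < k) (hε : 0 < ε) (hr1 : 1 ≤ r) (x y : E) (a b : Fin k → E) :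
    |mollifiedH d k ε φ x a - mollifiedH d k ε φ y b| ≤
      |L| * (dist x y + ((k:ℝ)⁻¹ * ∑ i, dist (a i) (b i) ^ r) ^ (1/r)) := by
  set D : ℝ := dist x y + ((k:ℝ)⁻¹ * ∑ i, dist (a i) (b i) ^ r) ^ (1/r) with hD
  have hD0 : 0 ≤ D := add_nonneg dist_nonneg (avg_rpow_nonneg _ fun _ => dist_nonneg)
  rw [mollifiedH_eq, mollifiedH_eq,
    ← integral_sub (outer_integrable hφ hk hε hr1 x a) (outer_integrable hφ hk hε hr1 y b)]
  have habs := norm_integral_le_integral_norm (μ := (volume : Measure E))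
    (f := fun y₀ : E => innerInt d k ε φ (x - y₀) a * stdMollifier d ε y₀ -
      innerInt d k ε φ (y - y₀) b * stdMollifier d ε y₀)
  rw [Real.norm_eq_abs] at habs
  refine le_trans habs ?_
  have hpt : ∀ y₀ : E,
      ‖innerInt d k ε φ (x - y₀) a * stdMollifier d ε y₀ -
        innerInt d k ε φ (y - y₀) b * stdMollifier d ε y₀‖ ≤
      (|L| * D) * stdMollifier d ε y₀ := by
    intro y₀
    rw [← sub_mul, Real.norm_eq_abs, abs_mul, abs_of_nonneg (stdMollifier_nonneg hε y₀)]
    apply mul_le_mul_of_nonneg_right ?_ (stdMollifier_nonneg hε y₀)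
    calc |innerInt d k ε φ (x - y₀) a - innerInt d k ε φ (y - y₀) b|
        ≤ |L| * (dist (x - y₀) (y - y₀) +
            ((k:ℝ)⁻¹ * ∑ i, dist (a i) (b i) ^ r) ^ (1/r)) :=
          innerInt_diff_le hφ hk hε hr1 _ _ a b
      _ = |L| * D := by rw [dist_sub_right, hD]
  calc ∫ y₀ : E, ‖innerInt d k ε φ (x - y₀) a * stdMollifier d ε y₀ -
        innerInt d k ε φ (y - y₀) b * stdMollifier d ε y₀‖ ∂(volume : Measure E)
      ≤ ∫ y₀ : E, (|L| * D) * stdMollifier d ε y₀ ∂(volume : Measure E) := by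
        apply integral_mono ?_ ((integrable_stdMollifier hε).const_mul _) hpt
        exact ((outer_integrable hφ hk hε hr1 x a).sub (outer_integrable hφ hk hε hr1 y b)).norm
    _ = |L| * D := by rw [integral_const_mul, integral_stdMollifier hε, mul_one]

end MollAux4


namespace MollAux5

open MollAux MollAux2 MollAux3 MollAux4

variable {d k : ℕ} {r L : ℝ}
  {φ : EuclideanSpace ℝ (Fin d) → Measure (EuclideanSpace ℝ (Fin d)) → ℝ}

local notation "E" => EuclideanSpace ℝ (Fin d)

lemma map_eval_pi {ι : Type*} [Fintype ι] {α : ι → Type*} [∀ i, MeasurableSpace (α i)]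
    (μ : ∀ i, Measure (α i)) [∀ i, IsProbabilityMeasure (μ i)] (i : ι) :
    (Measure.pi μ).map (Function.eval i) = μ i := by
  classical
  ext s hs
  rw [Measure.map_apply (measurable_pi_apply i) hs, Set.eval_preimage, Measure.pi_pi]
  rw [Finset.prod_eq_single i (fun j _ hj => by
      rw [Function.update_of_ne hj]; exact measure_univ)
    (fun h => absurd (Finset.mem_univ i) h)]
  rw [Function.update_self]

lemma measurePreserving_eval {ι : Type*} [Fintype ι] {α : ι → Type*}
    [∀ i, MeasurableSpace (α i)] (μ : ∀ i, Measure (α i)) [∀ i, IsProbabilityMeasure (μ i)]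
    (i : ι) : MeasurePreserving (Function.eval i) (Measure.pi μ) (μ i) :=
  ⟨measurable_pi_apply i, map_eval_pi μ i⟩

lemma integrable_norm_sq {μ : Measure E} (hμ : IsP2 μ) :
    Integrable (fun z : E => ‖z‖ ^ (2:ℕ)) μ := by
  have h := hμ.2.integrable_norm_rpow (by norm_num) (by norm_num)
  have : ENNReal.toReal 2 = (2:ℝ) := by norm_num
  rw [this] at h
  refine h.congr (Filter.Eventually.of_forall fun z => ?_)
  show ‖z‖ ^ (2:ℝ) = ‖z‖ ^ (2:ℕ)
  rw [← Real.rpow_natCast ‖z‖ 2]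
  norm_num

lemma dist_rpow_le_poly (hr1 : 1 ≤ r) (hr2 : r ≤ 2) (p : E × E) :
    dist p.1 p.2 ^ r ≤ 1 + (2 * ‖p.1‖ ^ (2:ℕ) + 2 * ‖p.2‖ ^ (2:ℕ)) := by
  set t : ℝ := dist p.1 p.2 with ht
  have ht0 : 0 ≤ t := dist_nonneg
  have h1 : t ^ r ≤ 1 + t ^ (2:ℕ) := by
    rcases le_or_gt t 1 with h | h
    · have := Real.rpow_le_one ht0 h (by linarith : (0:ℝ) ≤ r)
      have h2 : (0:ℝ) ≤ t ^ (2:ℕ) := by positivity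
      linarith
    · have hle : t ^ r ≤ t ^ (2:ℝ) := Real.rpow_le_rpow_of_exponent_le h.le hr2
      rw [show (2:ℝ) = ((2:ℕ):ℝ) by norm_num, Real.rpow_natCast] at hle
      linarith
  have h2 : t ≤ ‖p.1‖ + ‖p.2‖ := by
    rw [ht, dist_eq_norm]; exact norm_sub_le _ _
  have h3 : t ^ (2:ℕ) ≤ 2 * ‖p.1‖ ^ (2:ℕ) + 2 * ‖p.2‖ ^ (2:ℕ) := by
    nlinarith [norm_nonneg p.1, norm_nonneg p.2, sq_nonneg (‖p.1‖ - ‖p.2‖), h2, ht0]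
  linarith

lemma integrable_dist_rpow_coupling (hr1 : 1 ≤ r) (hr2 : r ≤ 2)
    {μ ν : Measure E} (hμ : IsP2 μ) (hν : IsP2 ν)
    (γ : Measure (E × E)) (hfst : γ.map Prod.fst = μ) (hsnd : γ.map Prod.snd = ν) :
    Integrable (fun p : E × E => dist p.1 p.2 ^ r) γ := by
  have hr0 : (0:ℝ) < r := lt_of_lt_of_le one_pos hr1
  have hg1 : Integrable (fun p : E × E => ‖p.1‖ ^ (2:ℕ)) γ := by
    have h := integrable_norm_sq hμ
    rw [← hfst] at h
    exact (integrable_map_measure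
      ((continuous_norm.pow 2).aestronglyMeasurable) measurable_fst.aemeasurable).1 h
  have hg2 : Integrable (fun p : E × E => ‖p.2‖ ^ (2:ℕ)) γ := by
    have h := integrable_norm_sq hν
    rw [← hsnd] at h
    exact (integrable_map_measure
      ((continuous_norm.pow 2).aestronglyMeasurable) measurable_snd.aemeasurable).1 h
  haveI : IsProbabilityMeasure γ := by
    constructor
    have : γ Set.univ = (γ.map Prod.fst) Set.univ := by
      rw [Measure.map_apply measurable_fst MeasurableSet.univ, Set.preimage_univ]
    rw [this, hfst]
    haveI := hμ.1
    exact measure_univ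
  refine Integrable.mono'
    (g := fun p => 1 + (2 * ‖p.1‖ ^ (2:ℕ) + 2 * ‖p.2‖ ^ (2:ℕ)))
    ((integrable_const (1:ℝ)).add (((hg1.const_mul 2)).add ((hg2.const_mul 2))))
    (((continuous_fst.dist continuous_snd).rpow_const
      (fun p => Or.inr hr0.le)).aestronglyMeasurable)
    (Filter.Eventually.of_forall fun p => ?_)
  rw [Real.norm_eq_abs, abs_of_nonneg (Real.rpow_nonneg dist_nonneg r)]
  exact dist_rpow_le_poly hr1 hr2 p

lemma mollifiedH_lipschitz_snd
    (hφ : ∀ x y : E, ∀ μ ν : Measure E, IsP2 μ → IsP2 ν →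
      |φ x μ - φ y ν| ≤ L * (dist x y + wassersteinDist r μ ν))
    (hk : 0 < k) {ε : ℝ} (hε : 0 < ε) (hr1 : 1 ≤ r) (x : E) :
    Continuous (fun a : Fin k → E => mollifiedH d k ε φ x a) := by
  apply LipschitzWith.continuous (K := Real.toNNReal |L|)
  apply LipschitzWith.of_dist_le_mul
  intro a b
  rw [Real.coe_toNNReal _ (abs_nonneg L), Real.dist_eq]
  calc |mollifiedH d k ε φ x a - mollifiedH d k ε φ x b|
      ≤ |L| * (dist x x + ((k:ℝ)⁻¹ * ∑ i, dist (a i) (b i) ^ r) ^ (1/r)) :=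
        mollifiedH_diff_le hφ hk hε hr1 x x a b
    _ ≤ |L| * dist a b := by
        rw [dist_self, zero_add]
        exact mul_le_mul_of_nonneg_left (avg_rpow_dist_le hk hr1 a b) (abs_nonneg L)

lemma mollifiedH_abs_le
    (hφ : ∀ x y : E, ∀ μ ν : Measure E, IsP2 μ → IsP2 ν →
      |φ x μ - φ y ν| ≤ L * (dist x y + wassersteinDist r μ ν))
    (hk : 0 < k) {ε : ℝ} (hε : 0 < ε) (hr1 : 1 ≤ r) (x : E) (a : Fin k → E) :
    |mollifiedH d k ε φ x a| ≤
      (|mollifiedH d k ε φ x (fun _ => 0)| + |L|) +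
        |L| * ((k:ℝ)⁻¹ * ∑ i, ‖a i‖ ^ r) := by
  have hr0 : (0:ℝ) < r := lt_of_lt_of_le one_pos hr1
  have h1 : |mollifiedH d k ε φ x a - mollifiedH d k ε φ x (fun _ => 0)| ≤
      |L| * (dist x x + ((k:ℝ)⁻¹ * ∑ i, dist (a i) ((fun _ : Fin k => (0:E)) i) ^ r) ^ (1/r)) :=
    mollifiedH_diff_le hφ hk hε hr1 x x a _
  rw [dist_self, zero_add] at h1
  simp only [dist_zero_right] at h1
  have h2 : ((k:ℝ)⁻¹ * ∑ i, ‖a i‖ ^ r) ^ (1/r) ≤ 1 + (k:ℝ)⁻¹ * ∑ i, ‖a i‖ ^ r := by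
    apply rpow_le_one_add ?_ (by positivity) (by
      rw [div_le_one hr0]; exact hr1)
    exact mul_nonneg (inv_nonneg.2 (Nat.cast_nonneg k))
      (Finset.sum_nonneg fun i _ => Real.rpow_nonneg (norm_nonneg _) r)
  calc |mollifiedH d k ε φ x a|
      ≤ |mollifiedH d k ε φ x a - mollifiedH d k ε φ x (fun _ => 0)| +
        |mollifiedH d k ε φ x (fun _ => 0)| := by
          have := abs_sub_abs_le_abs_sub (mollifiedH d k ε φ x a)
            (mollifiedH d k ε φ x (fun _ => 0))
          linarith
    _ ≤ |L| * (1 + (k:ℝ)⁻¹ * ∑ i, ‖a i‖ ^ r) + |mollifiedH d k ε φ x (fun _ => 0)| := by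
        have h3 := le_trans h1 (mul_le_mul_of_nonneg_left h2 (abs_nonneg L))
        linarith
    _ = _ := by ring

lemma rpow_le_one_add_sq (hr1 : 1 ≤ r) (hr2 : r ≤ 2) {t : ℝ} (ht0 : 0 ≤ t) :
    t ^ r ≤ 1 + t ^ (2:ℕ) := by
  rcases le_or_gt t 1 with h | h
  · have := Real.rpow_le_one ht0 h (by linarith : (0:ℝ) ≤ r)
    have h2 : (0:ℝ) ≤ t ^ (2:ℕ) := by positivity
    linarith
  · have hle : t ^ r ≤ t ^ (2:ℝ) := Real.rpow_le_rpow_of_exponent_le h.le hr2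
    rw [show (2:ℝ) = ((2:ℕ):ℝ) by norm_num, Real.rpow_natCast] at hle
    linarith

lemma integrable_fst_norm_sq {μ : Measure E} (γ : Measure (E × E))
    (hfst : γ.map Prod.fst = μ) (hμ : IsP2 μ) :
    Integrable (fun p : E × E => ‖p.1‖ ^ (2:ℕ)) γ := by
  have h := integrable_norm_sq hμ
  rw [← hfst] at h
  exact (integrable_map_measure
    ((continuous_norm.pow 2).aestronglyMeasurable) measurable_fst.aemeasurable).1 h

lemma integrable_snd_norm_sq {ν : Measure E} (γ : Measure (E × E))
    (hsnd : γ.map Prod.snd = ν) (hν : IsP2 ν) :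
    Integrable (fun p : E × E => ‖p.2‖ ^ (2:ℕ)) γ := by
  have h := integrable_norm_sq hν
  rw [← hsnd] at h
  exact (integrable_map_measure
    ((continuous_norm.pow 2).aestronglyMeasurable) measurable_snd.aemeasurable).1 h

lemma integrable_fst_norm_rpow (hr1 : 1 ≤ r) (hr2 : r ≤ 2) {μ : Measure E}
    (γ : Measure (E × E)) [IsFiniteMeasure γ]
    (hfst : γ.map Prod.fst = μ) (hμ : IsP2 μ) :
    Integrable (fun p : E × E => ‖p.1‖ ^ r) γ := by
  have hr0 : (0:ℝ) < r := lt_of_lt_of_le one_pos hr1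
  refine Integrable.mono' ((integrable_const (1:ℝ)).add (integrable_fst_norm_sq γ hfst hμ))
    ((continuous_fst.norm.rpow_const fun q => Or.inr hr0.le).aestronglyMeasurable)
    (Filter.Eventually.of_forall fun q => ?_)
  rw [Real.norm_eq_abs, abs_of_nonneg (Real.rpow_nonneg (norm_nonneg _) r)]
  exact rpow_le_one_add_sq hr1 hr2 (norm_nonneg _)

lemma integrable_snd_norm_rpow (hr1 : 1 ≤ r) (hr2 : r ≤ 2) {ν : Measure E}
    (γ : Measure (E × E)) [IsFiniteMeasure γ]
    (hsnd : γ.map Prod.snd = ν) (hν : IsP2 ν) :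
    Integrable (fun p : E × E => ‖p.2‖ ^ r) γ := by
  have hr0 : (0:ℝ) < r := lt_of_lt_of_le one_pos hr1
  refine Integrable.mono' ((integrable_const (1:ℝ)).add (integrable_snd_norm_sq γ hsnd hν))
    ((continuous_snd.norm.rpow_const fun q => Or.inr hr0.le).aestronglyMeasurable)
    (Filter.Eventually.of_forall fun q => ?_)
  rw [Real.norm_eq_abs, abs_of_nonneg (Real.rpow_nonneg (norm_nonneg _) r)]
  exact rpow_le_one_add_sq hr1 hr2 (norm_nonneg _)

end MollAux5


namespace MollAux6

open MollAux MollAux2 MollAux3 MollAux4 MollAux5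

variable {d k : ℕ} {r L : ℝ}
  {φ : EuclideanSpace ℝ (Fin d) → Measure (EuclideanSpace ℝ (Fin d)) → ℝ}

local notation "E" => EuclideanSpace ℝ (Fin d)

lemma key_coupling
    (hφ : ∀ x y : E, ∀ μ ν : Measure E, IsP2 μ → IsP2 ν →
      |φ x μ - φ y ν| ≤ L * (dist x y + wassersteinDist r μ ν))
    (hk : 0 < k) (hr1 : 1 ≤ r) (hr2 : r ≤ 2) (x y : E)
    {μ ν : Measure E} (hμ : IsP2 μ) (hν : IsP2 ν)
    (γ : Measure (E × E)) (hfst : γ.map Prod.fst = μ) (hsnd : γ.map Prod.snd = ν) :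
    |mollifiedApprox d k φ x μ - mollifiedApprox d k φ y ν| ≤
      |L| * (dist x y + (∫ p, dist p.1 p.2 ^ r ∂γ) ^ (1/r)) := by
  haveI hμp := hμ.1
  haveI hνp := hν.1
  haveI : IsProbabilityMeasure γ := by
    constructor
    rw [show γ Set.univ = (γ.map Prod.fst) Set.univ by
      rw [Measure.map_apply measurable_fst MeasurableSet.univ, Set.preimage_univ], hfst]
    exact measure_univ
  have hr0 : (0:ℝ) < r := lt_of_lt_of_le one_pos hr1
  have hk0 : (0:ℝ) < (k:ℝ) := by exact_mod_cast hk
  have hε : (0:ℝ) < 1 / (k:ℝ) := one_div_pos.2 hk0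
  haveI : BorelSpace (Fin k → E × E) := Pi.borelSpace
  set π : Measure (Fin k → E × E) := Measure.pi fun _ => γ with hπ
  haveI : IsProbabilityMeasure π := by
    rw [hπ]; exact Measure.pi.instIsProbabilityMeasure (μ := fun _ => γ)
  have hmp1 : MeasurePreserving (fun p : Fin k → E × E => fun i => (p i).1)
      π (Measure.pi fun _ => μ) :=
    measurePreserving_pi _ _ (fun _ => ⟨measurable_fst, hfst⟩)
  have hmp2 : MeasurePreserving (fun p : Fin k → E × E => fun i => (p i).2)
      π (Measure.pi fun _ => ν) :=
    measurePreserving_pi _ _ (fun _ => ⟨measurable_snd, hsnd⟩)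
  have hHcont1 := mollifiedH_lipschitz_snd hφ hk hε hr1 x
  have hHcont2 := mollifiedH_lipschitz_snd hφ hk hε hr1 y
  have hT1c : Continuous (fun p : Fin k → E × E => fun i => (p i).1) :=
    continuous_pi fun i => (continuous_apply i).fst
  have hT2c : Continuous (fun p : Fin k → E × E => fun i => (p i).2) :=
    continuous_pi fun i => (continuous_apply i).snd
  -- representations
  have hrep1 : mollifiedApprox d k φ x μ =
      ∫ p, mollifiedH d k (1/(k:ℝ)) φ x (fun i => (p i).1) ∂π := by
    have hg : AEStronglyMeasurable (fun a : Fin k → E => mollifiedH d k (1/(k:ℝ)) φ x a)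
        (Measure.map (fun p : Fin k → E × E => fun i => (p i).1) π) := by
      rw [hmp1.map_eq]; exact hHcont1.aestronglyMeasurable
    rw [show mollifiedApprox d k φ x μ =
        ∫ Xs, mollifiedH d k (1/(k:ℝ)) φ x Xs ∂(Measure.pi fun _ => μ) from rfl,
      ← hmp1.map_eq, integral_map hmp1.measurable.aemeasurable hg]
  have hrep2 : mollifiedApprox d k φ y ν =
      ∫ p, mollifiedH d k (1/(k:ℝ)) φ y (fun i => (p i).2) ∂π := by
    have hg : AEStronglyMeasurable (fun a : Fin k → E => mollifiedH d k (1/(k:ℝ)) φ y a)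
        (Measure.map (fun p : Fin k → E × E => fun i => (p i).2) π) := by
      rw [hmp2.map_eq]; exact hHcont2.aestronglyMeasurable
    rw [show mollifiedApprox d k φ y ν =
        ∫ Xs, mollifiedH d k (1/(k:ℝ)) φ y Xs ∂(Measure.pi fun _ => ν) from rfl,
      ← hmp2.map_eq, integral_map hmp2.measurable.aemeasurable hg]
  -- integrability of the two integrands
  have hnorm1 : Integrable (fun q : E × E => ‖q.1‖ ^ r) γ :=
    integrable_fst_norm_rpow hr1 hr2 γ hfst hμ
  have hnorm2 : Integrable (fun q : E × E => ‖q.2‖ ^ r) γ :=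
    integrable_snd_norm_rpow hr1 hr2 γ hsnd hν
  have hsum1 : Integrable (fun p : Fin k → E × E => ∑ i, ‖(p i).1‖ ^ r) π := by
    refine integrable_finset_sum _ fun i _ => ?_
    exact ((MollAux5.measurePreserving_eval (fun _ => γ) i).integrable_comp
      hnorm1.aestronglyMeasurable).2 hnorm1
  have hsum2 : Integrable (fun p : Fin k → E × E => ∑ i, ‖(p i).2‖ ^ r) π := by
    refine integrable_finset_sum _ fun i _ => ?_
    exact ((MollAux5.measurePreserving_eval (fun _ => γ) i).integrable_comp
      hnorm2.aestronglyMeasurable).2 hnorm2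
  have hint1 : Integrable (fun p : Fin k → E × E =>
      mollifiedH d k (1/(k:ℝ)) φ x (fun i => (p i).1)) π := by
    refine Integrable.mono'
      (g := fun p => (|mollifiedH d k (1/(k:ℝ)) φ x (fun _ => 0)| + |L|) +
        |L| * ((k:ℝ)⁻¹ * ∑ i, ‖(p i).1‖ ^ r))
      ((integrable_const _).add (((hsum1.const_mul (k:ℝ)⁻¹).const_mul |L|)))
      ((hHcont1.comp hT1c).aestronglyMeasurable)
      (Filter.Eventually.of_forall fun p => ?_)
    rw [Real.norm_eq_abs]
    exact mollifiedH_abs_le hφ hk hε hr1 x _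
  have hint2 : Integrable (fun p : Fin k → E × E =>
      mollifiedH d k (1/(k:ℝ)) φ y (fun i => (p i).2)) π := by
    refine Integrable.mono'
      (g := fun p => (|mollifiedH d k (1/(k:ℝ)) φ y (fun _ => 0)| + |L|) +
        |L| * ((k:ℝ)⁻¹ * ∑ i, ‖(p i).2‖ ^ r))
      ((integrable_const _).add (((hsum2.const_mul (k:ℝ)⁻¹).const_mul |L|)))
      ((hHcont2.comp hT2c).aestronglyMeasurable)
      (Filter.Eventually.of_forall fun p => ?_)
    rw [Real.norm_eq_abs]
    exact mollifiedH_abs_le hφ hk hε hr1 y _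
  -- the cost functional
  set Z : (Fin k → E × E) → ℝ := fun p => (k:ℝ)⁻¹ * ∑ i, dist ((p i).1) ((p i).2) ^ r with hZ
  have hZ0 : ∀ p, 0 ≤ Z p := fun p => mul_nonneg (inv_nonneg.2 (Nat.cast_nonneg k))
    (Finset.sum_nonneg fun i _ => Real.rpow_nonneg dist_nonneg r)
  have hdist_int : Integrable (fun q : E × E => dist q.1 q.2 ^ r) γ :=
    integrable_dist_rpow_coupling hr1 hr2 hμ hν γ hfst hsnd
  have hZint : Integrable Z π := by
    apply Integrable.const_mul
    refine integrable_finset_sum _ fun i _ => ?_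
    exact ((MollAux5.measurePreserving_eval (fun _ => γ) i).integrable_comp
      hdist_int.aestronglyMeasurable).2 hdist_int
  have hZcont : Continuous Z := by
    apply continuous_const.mul
    exact continuous_finset_sum _ fun i _ =>
      (((continuous_apply i).fst.dist (continuous_apply i).snd).rpow_const fun p => Or.inr hr0.le)
  have hZp_cont : Continuous fun p => Z p ^ (1/r) :=
    hZcont.rpow_const fun p => Or.inr (one_div_pos.2 hr0).le
  have hZp_int : Integrable (fun p => Z p ^ (1/r)) π := by
    refine Integrable.mono' ((integrable_const (1:ℝ)).add hZint)
      hZp_cont.aestronglyMeasurable (Filter.Eventually.of_forall fun p => ?_)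
    rw [Real.norm_eq_abs, abs_of_nonneg (Real.rpow_nonneg (hZ0 p) _)]
    exact rpow_le_one_add (hZ0 p) (one_div_pos.2 hr0) (by rw [div_le_one hr0]; exact hr1)
  have hjensen : ∫ p, Z p ^ (1/r) ∂π ≤ (∫ p, Z p ∂π) ^ (1/r) :=
    jensen_rpow π (one_div_pos.2 hr0) (by rw [div_le_one hr0]; exact hr1) hZint hZ0 hZp_int
  have hZavg : ∫ p, Z p ∂π = ∫ q, dist q.1 q.2 ^ r ∂γ := by
    have heach : ∀ i : Fin k,
        ∫ p, dist ((p i).1) ((p i).2) ^ r ∂π = ∫ q, dist q.1 q.2 ^ r ∂γ := by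
      intro i
      have hg : AEStronglyMeasurable (fun q : E × E => dist q.1 q.2 ^ r)
          (Measure.map (Function.eval i) π) := by
        rw [show Measure.map (Function.eval i) π = γ from map_eval_pi (fun _ => γ) i]
        exact ((continuous_fst.dist continuous_snd).rpow_const
          fun q => Or.inr hr0.le).aestronglyMeasurable
      rw [show γ = Measure.map (Function.eval i) π from (map_eval_pi (fun _ => γ) i).symm,
        integral_map (measurable_pi_apply i).aemeasurable hg]
    have hI : ∀ i ∈ Finset.univ, Integrable
        (fun p : Fin k → E × E => dist ((p i).1) ((p i).2) ^ r) π := fun i _ => by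
      exact ((MollAux5.measurePreserving_eval (fun _ => γ) i).integrable_comp
        hdist_int.aestronglyMeasurable).2 hdist_int
    calc ∫ p, Z p ∂π
        = (k:ℝ)⁻¹ * ∫ p, ∑ i, dist ((p i).1) ((p i).2) ^ r ∂π := by
          simp only [hZ]; rw [integral_const_mul]
      _ = (k:ℝ)⁻¹ * ∑ i, ∫ p, dist ((p i).1) ((p i).2) ^ r ∂π := by
          rw [integral_finset_sum _ hI]
      _ = (k:ℝ)⁻¹ * ∑ _i : Fin k, ∫ q, dist q.1 q.2 ^ r ∂γ := by
          simp only [heach]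
      _ = ∫ q, dist q.1 q.2 ^ r ∂γ := by
          rw [Finset.sum_const, Finset.card_univ, Fintype.card_fin, nsmul_eq_mul, ← mul_assoc,
            inv_mul_cancel₀ hk0.ne', one_mul]
  -- pointwise bound
  have hpt : ∀ p : Fin k → E × E,
      ‖mollifiedH d k (1/(k:ℝ)) φ x (fun i => (p i).1) -
        mollifiedH d k (1/(k:ℝ)) φ y (fun i => (p i).2)‖ ≤
      |L| * (dist x y + Z p ^ (1/r)) := fun p => by
    rw [Real.norm_eq_abs]
    exact mollifiedH_diff_le hφ hk hε hr1 x y _ _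
  -- main chain
  rw [hrep1, hrep2, ← integral_sub hint1 hint2]
  have habs := norm_integral_le_integral_norm (μ := π)
    (f := fun p : Fin k → E × E => mollifiedH d k (1/(k:ℝ)) φ x (fun i => (p i).1) -
      mollifiedH d k (1/(k:ℝ)) φ y (fun i => (p i).2))
  rw [Real.norm_eq_abs] at habs
  refine le_trans habs ?_
  have hmono : (∫ p, ‖mollifiedH d k (1/(k:ℝ)) φ x (fun i => (p i).1) -
        mollifiedH d k (1/(k:ℝ)) φ y (fun i => (p i).2)‖ ∂π) ≤
      ∫ p, |L| * (dist x y + Z p ^ (1/r)) ∂π :=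
    integral_mono ((hint1.sub hint2).norm)
      (((integrable_const (dist x y)).add hZp_int).const_mul |L|) hpt
  refine le_trans hmono ?_
  rw [integral_const_mul, integral_add (integrable_const _) hZp_int, integral_const]
  simp only [probReal_univ, ENNReal.toReal_one, smul_eq_mul, one_mul]
  have h1 : ∫ p, Z p ^ (1/r) ∂π ≤ (∫ q, dist q.1 q.2 ^ r ∂γ) ^ (1/r) := by
    rw [← hZavg]; exact hjensen
  exact mul_le_mul_of_nonneg_left (add_le_add_right h1 _) (abs_nonneg L)

end MollAux6


/-- If `φ : ℝ^d × P₂(ℝ^d) → ℝ` is Lipschitz with respect to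
`|·| × d_r`, then each approximation `φ_k` is Lipschitz with respect to `|·| × d_r`
with a Lipschitz constant depending only on the Lipschitz constant of `φ`
(independent of `k`). -/
theorem mollifiedApprox_lipschitz
    (d : ℕ) (r : ℝ) (hr1 : 1 ≤ r) (hr2 : r ≤ 2)
    (φ : EuclideanSpace ℝ (Fin d) → Measure (EuclideanSpace ℝ (Fin d)) → ℝ) (L : ℝ)
    (hφ : ∀ x y : EuclideanSpace ℝ (Fin d),
      ∀ μ ν : Measure (EuclideanSpace ℝ (Fin d)), IsP2 μ → IsP2 ν →
      |φ x μ - φ y ν| ≤ L * (dist x y + wassersteinDist r μ ν)) :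
    ∃ C : ℝ, 0 ≤ C ∧ ∀ k : ℕ, 0 < k →
      ∀ x y : EuclideanSpace ℝ (Fin d),
      ∀ μ ν : Measure (EuclideanSpace ℝ (Fin d)), IsP2 μ → IsP2 ν →
      |mollifiedApprox d k φ x μ - mollifiedApprox d k φ y ν| ≤
        C * (dist x y + wassersteinDist r μ ν) := by
  refine ⟨|L|, abs_nonneg L, fun k hk x y μ ν hμ hν => ?_⟩
  haveI := hμ.1
  haveI := hν.1
  set S : Set ℝ := { c | ∃ γ : Measure (EuclideanSpace ℝ (Fin d) × EuclideanSpace ℝ (Fin d)),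
    γ.map Prod.fst = μ ∧ γ.map Prod.snd = ν ∧
    c = (∫ p, dist p.1 p.2 ^ r ∂γ) ^ (1 / r) } with hS
  have hW : wassersteinDist r μ ν = sInf S := rfl
  have hne : S.Nonempty := by
    refine ⟨(∫ p, dist p.1 p.2 ^ r ∂(μ.prod ν)) ^ (1 / r), μ.prod ν, ?_, ?_, rfl⟩
    · rw [Measure.map_fst_prod]; simp [measure_univ]
    · rw [Measure.map_snd_prod]; simp [measure_univ]
  refine le_of_forall_pos_le_add fun δ hδ => ?_
  have habsL : (0:ℝ) < |L| + 1 := by positivity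
  set δ' : ℝ := δ / (|L| + 1) with hδ'
  have hδ'0 : 0 < δ' := div_pos hδ habsL
  obtain ⟨c, hcS, hclt⟩ := exists_lt_of_csInf_lt hne (lt_add_of_pos_right (sInf S) hδ'0)
  obtain ⟨γ, hfst, hsnd, rfl⟩ := hcS
  have hkey := MollAux6.key_coupling hφ hk hr1 hr2 x y hμ hν γ hfst hsnd
  have hL' : |L| * δ' ≤ δ := by
    rw [hδ', mul_div_assoc']
    rw [div_le_iff₀ habsL]
    nlinarith [abs_nonneg L]
  calc |mollifiedApprox d k φ x μ - mollifiedApprox d k φ y ν|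
      ≤ |L| * (dist x y + (∫ p, dist p.1 p.2 ^ r ∂γ) ^ (1 / r)) := hkey
    _ ≤ |L| * (dist x y + (sInf S + δ')) :=
        mul_le_mul_of_nonneg_left (add_le_add_right hclt.le _) (abs_nonneg L)
    _ = |L| * (dist x y + sInf S) + |L| * δ' := by ring
    _ ≤ |L| * (dist x y + wassersteinDist r μ ν) + δ := by
        rw [hW]; linarith
end

section
/- In the mollification scheme φ_k of a Lipschitz function φ : ℝ^d × P₂(ℝ^d) → ℝ, if the lift φ̃(x, X) := φ(x, X_# L¹) is convex on ℝ^d × E, then the lift φ̃_k of φ_k is convex on ℝ^d × E for every k. -/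
open MeasureTheory
open scoped ENNReal

/-- Lebesgue measure on Ω = (0,1). -/
noncomputable def μΩ : Measure ℝ := volume.restrict (Set.Ioo (0:ℝ) 1)

section Helpers

open scoped BigOperators

variable {d : ℕ}

local notation "V" => EuclideanSpace ℝ (Fin d)

instance : IsProbabilityMeasure μΩ := by
  constructor
  rw [μΩ, Measure.restrict_apply_univ, Real.volume_Ioo]
  norm_num

/-! ### Mollifier basics -/

lemma bump_nonneg (x : V) : 0 ≤ bump x := by
  unfold bump; split <;> positivity

lemma bump_le_one (x : V) : bump x ≤ 1 := by
  unfold bump; split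
  · rename_i h
    have h2 : ‖x‖ ^ 2 - 1 < 0 := by nlinarith [norm_nonneg x]
    exact Real.exp_le_one_iff.2 (div_nonpos_of_nonneg_of_nonpos zero_le_one h2.le)
  · exact zero_le_one

lemma bump_eq_zero {x : V} (h : 1 ≤ ‖x‖) : bump x = 0 := if_neg (not_lt.2 h)

lemma measurable_bump : Measurable (bump (d := d)) := by
  unfold bump
  exact Measurable.ite (measurableSet_lt measurable_norm measurable_const)
    (Real.measurable_exp.comp (measurable_const.div
      ((measurable_norm.pow_const 2).sub measurable_const))) measurable_const

lemma bumpConst_nonneg : 0 ≤ bumpConst d :=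
  inv_nonneg.2 (integral_nonneg bump_nonneg)

lemma stdMollifier_nonneg {ε : ℝ} (hε : 0 < ε) (x : V) : 0 ≤ stdMollifier d ε x :=
  mul_nonneg (mul_nonneg (zpow_nonneg hε.le _) bumpConst_nonneg) (bump_nonneg _)

lemma stdMollifier_eq_zero {ε : ℝ} (hε : 0 < ε) {x : V} (h : ε ≤ ‖x‖) :
    stdMollifier d ε x = 0 := by
  rw [stdMollifier, bump_eq_zero, mul_zero]
  rw [norm_smul, Real.norm_eq_abs, abs_of_nonneg (inv_nonneg.2 hε.le)]
  have := mul_le_mul_of_nonneg_left h (inv_nonneg.2 hε.le)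
  rwa [inv_mul_cancel₀ hε.ne'] at this

lemma norm_lt_of_stdMollifier_ne_zero {ε : ℝ} (hε : 0 < ε) {x : V}
    (h : stdMollifier d ε x ≠ 0) : ‖x‖ < ε := by
  by_contra hc
  exact h (stdMollifier_eq_zero hε (not_lt.1 hc))

lemma measurable_stdMollifier (ε : ℝ) : Measurable (stdMollifier d ε) :=
  ((measurable_bump.comp (measurable_id.const_smul ε⁻¹)).const_mul _)

lemma integrable_stdMollifier {ε : ℝ} (hε : 0 < ε) :
    Integrable (stdMollifier d ε) (volume : Measure V) := by
  have hind : Integrable ((Metric.closedBall (0:V) ε).indicator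
      fun _ => |ε ^ (-(d:ℤ)) * bumpConst d|) volume := by
    rw [integrable_indicator_iff measurableSet_closedBall]
    exact integrableOn_const measure_closedBall_lt_top.ne
  refine hind.mono' (measurable_stdMollifier ε).aestronglyMeasurable
    (Filter.Eventually.of_forall fun x => ?_)
  by_cases hx : ‖x‖ ≤ ε
  · rw [Set.indicator_of_mem (by simpa [Metric.mem_closedBall, dist_zero_right] using hx)]
    rw [Real.norm_eq_abs, stdMollifier, abs_mul]
    calc |ε ^ (-(d:ℤ)) * bumpConst d| * |bump (ε⁻¹ • x)|
        ≤ |ε ^ (-(d:ℤ)) * bumpConst d| * 1 := by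
          gcongr
          rw [abs_of_nonneg (bump_nonneg _)]; exact bump_le_one _
      _ = _ := mul_one _
  · rw [stdMollifier_eq_zero hε (not_le.1 hx).le]
    rw [norm_zero]; exact Set.indicator_nonneg (fun _ _ => abs_nonneg _) x

/-- The total mass of the mollifier. -/
noncomputable def mollConst (d : ℕ) (ε : ℝ) : ℝ :=
  ∫ x, stdMollifier d ε x ∂(volume : Measure (EuclideanSpace ℝ (Fin d)))

lemma mollConst_nonneg {ε : ℝ} (hε : 0 < ε) : 0 ≤ mollConst d ε :=
  integral_nonneg (stdMollifier_nonneg hε)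

lemma integrable_prodMoll {k : ℕ} {ε : ℝ} (hε : 0 < ε) :
    Integrable (fun ys : Fin k → V => ∏ i, stdMollifier d ε (ys i))
      (Measure.pi fun _ => (volume : Measure V)) := by
  rw [← volume_pi]
  exact Integrable.fintype_prod (f := fun _ : Fin k => stdMollifier d ε)
    (fun i => integrable_stdMollifier hε)

lemma integral_prodMoll {k : ℕ} (ε : ℝ) :
    ∫ ys : Fin k → V, (∏ i, stdMollifier d ε (ys i))
      ∂(Measure.pi fun _ => (volume : Measure V)) = mollConst d ε ^ k := by
  simpa [mollConst] using
    MeasureTheory.integral_fintype_prod_eq_pow (ι := Fin k) (stdMollifier d ε)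

end Helpers
section Empirical

variable {d : ℕ}

local notation "V" => EuclideanSpace ℝ (Fin d)

lemma emp_apply {k : ℕ} (p : Fin k → V) {s : Set V} (hs : MeasurableSet s) :
    empiricalMeasure p s = (k : ℝ≥0∞)⁻¹ * ∑ i, s.indicator 1 (p i) := by
  simp [empiricalMeasure, Measure.smul_apply, Measure.finset_sum_apply,
    Measure.dirac_apply' _ hs, smul_eq_mul]

lemma isProbabilityMeasure_emp {k : ℕ} (hk : 0 < k) (p : Fin k → V) :
    IsProbabilityMeasure (empiricalMeasure p) := by
  constructor
  rw [emp_apply p MeasurableSet.univ]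
  simp only [Set.indicator_univ, Pi.one_apply, Finset.sum_const, Finset.card_univ,
    Fintype.card_fin, nsmul_eq_mul, mul_one]
  exact ENNReal.inv_mul_cancel (by exact_mod_cast hk.ne') (ENNReal.natCast_ne_top k)

/-- Index of the subinterval of `(0,1)` containing `ω`. -/
noncomputable def stepIdx (k : ℕ) (ω : ℝ) : ℕ := min ⌊(k : ℝ) * ω⌋₊ (k - 1)

lemma stepIdx_lt {k : ℕ} (hk : 0 < k) (ω : ℝ) : stepIdx k ω < k :=
  lt_of_le_of_lt (min_le_right _ _) (by omega)

lemma measurable_stepIdx (k : ℕ) : Measurable (stepIdx k) := by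
  have h1 : Measurable fun ω : ℝ => ⌊(k : ℝ) * ω⌋₊ :=
    Nat.measurable_floor.comp (measurable_const.mul measurable_id)
  exact (measurable_of_countable (fun n : ℕ => min n (k - 1))).comp h1

/-- The step function on `(0,1)` whose pushforward of `μΩ` is the empirical measure. -/
noncomputable def stepFun {d k : ℕ} (hk : 0 < k) (p : Fin k → EuclideanSpace ℝ (Fin d))
    (ω : ℝ) : EuclideanSpace ℝ (Fin d) := p ⟨stepIdx k ω, stepIdx_lt hk ω⟩

lemma measurable_stepFun {k : ℕ} (hk : 0 < k) (p : Fin k → V) :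
    Measurable (stepFun hk p) := by
  have : stepFun hk p = (fun n : ℕ => if h : n < k then p ⟨n, h⟩ else 0) ∘ stepIdx k := by
    funext ω; simp [stepFun, Function.comp, dif_pos (stepIdx_lt hk ω)]
  rw [this]
  exact (measurable_of_countable _).comp (measurable_stepIdx k)

lemma memℒp_stepFun {k : ℕ} (hk : 0 < k) (p : Fin k → V) :
    MemLp (stepFun hk p) 2 μΩ := by
  refine MemLp.of_bound (measurable_stepFun hk p).aestronglyMeasurable (∑ i, ‖p i‖)
    (Filter.Eventually.of_forall fun ω => ?_)
  exact Finset.single_le_sum (fun i _ => norm_nonneg (p i)) (Finset.mem_univ _)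

lemma stepIdx_eq {k : ℕ} (hk : 0 < k) (i : Fin k) {ω : ℝ} (hω : ω ∈ Set.Ioo (0:ℝ) 1)
    (hico : ω ∈ Set.Ico ((i : ℝ) / k) (((i : ℝ) + 1) / k)) : stepIdx k ω = i := by
  have hkR : (0:ℝ) < k := by exact_mod_cast hk
  have h0 : (0:ℝ) ≤ (k : ℝ) * ω := by
    have := hω.1.le; positivity
  have h1 : (i : ℝ) ≤ (k : ℝ) * ω := by
    have := (div_le_iff₀ hkR).1 hico.1; linarith
  have h2 : (k : ℝ) * ω < (i : ℝ) + 1 := by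
    have := (lt_div_iff₀ hkR).1 hico.2; linarith
  have hfl : ⌊(k : ℝ) * ω⌋₊ = (i : ℕ) := by
    rw [Nat.floor_eq_iff h0]; exact ⟨h1, h2⟩
  rw [stepIdx, hfl]
  exact min_eq_left (by omega)

lemma map_stepFun {k : ℕ} (hk : 0 < k) (p : Fin k → V) :
    Measure.map (stepFun hk p) μΩ = empiricalMeasure p := by
  classical
  have hkR : (0:ℝ) < k := by exact_mod_cast hk
  ext s hs
  rw [Measure.map_apply (measurable_stepFun hk p) hs, emp_apply p hs, μΩ,
    Measure.restrict_apply ((measurable_stepFun hk p) hs)]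
  set B : Fin k → Set ℝ := fun i =>
    if p i ∈ s then Set.Ioo (0:ℝ) 1 ∩ Set.Ico ((i : ℝ) / k) (((i : ℝ) + 1) / k) else ∅ with hB
  have hBsub : ∀ i : Fin k, ∀ ω ∈ B i, stepIdx k ω = i ∧ ω ∈ Set.Ioo (0:ℝ) 1 ∧ p i ∈ s := by
    intro i ω hω
    by_cases hi : p i ∈ s
    · simp only [hB, if_pos hi] at hω
      exact ⟨stepIdx_eq hk i hω.1 hω.2, hω.1, hi⟩
    · simp only [hB, if_neg hi] at hω
      exact absurd hω (Set.notMem_empty ω)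
  have key : stepFun hk p ⁻¹' s ∩ Set.Ioo 0 1 = ⋃ i, B i := by
    ext ω
    constructor
    · rintro ⟨hpre, hω⟩
      have h0 : (0:ℝ) ≤ (k : ℝ) * ω := by have := hω.1.le; positivity
      set i : Fin k := ⟨stepIdx k ω, stepIdx_lt hk ω⟩ with hi
      have hfl : stepIdx k ω = ⌊(k : ℝ) * ω⌋₊ := by
        have hlt : ⌊(k : ℝ) * ω⌋₊ < k := by
          rw [Nat.floor_lt h0]
          calc (k:ℝ) * ω < k * 1 := by
                exact mul_lt_mul_of_pos_left hω.2 hkR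
            _ = k := mul_one _
        exact min_eq_left (by omega)
      refine Set.mem_iUnion.2 ⟨i, ?_⟩
      simp only [hB]
      rw [if_pos (by exact hpre)]
      refine ⟨hω, ?_, ?_⟩
      · rw [div_le_iff₀ hkR]
        have : ((stepIdx k ω : ℝ)) ≤ (k:ℝ) * ω := by
          rw [hfl]; exact_mod_cast Nat.floor_le h0
        simpa [hi] using by linarith
      · rw [lt_div_iff₀ hkR]
        have : (k:ℝ) * ω < (stepIdx k ω : ℝ) + 1 := by
          rw [hfl]; exact_mod_cast Nat.lt_floor_add_one ((k:ℝ) * ω)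
        simpa [hi] using by linarith
    · intro hω
      obtain ⟨i, hωi⟩ := Set.mem_iUnion.1 hω
      obtain ⟨hidx, hIoo, hmem⟩ := hBsub i ω hωi
      refine ⟨?_, hIoo⟩
      have hfin : (⟨stepIdx k ω, stepIdx_lt hk ω⟩ : Fin k) = i := by
        apply Fin.val_injective; exact hidx
      have : stepFun hk p ω = p i := by rw [stepFun, hfin]
      rw [Set.mem_preimage, this]; exact hmem
  rw [key]
  have hBm : ∀ i, MeasurableSet (B i) := by
    intro i
    by_cases hi : p i ∈ s
    · simp only [hB, if_pos hi]; exact measurableSet_Ioo.inter measurableSet_Ico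
    · simp only [hB, if_neg hi]; exact MeasurableSet.empty
  have hdisj : Pairwise (Function.onFun Disjoint B) := by
    intro i j hij
    exact Set.disjoint_left.2 fun {ω} hωi hωj =>
      hij (Fin.val_injective (((hBsub i ω hωi).1.symm).trans (hBsub j ω hωj).1))
  rw [measure_iUnion hdisj hBm, tsum_fintype]
  have hvol : ∀ i : Fin k, volume (B i) = if p i ∈ s then (k : ℝ≥0∞)⁻¹ else 0 := by
    intro i
    by_cases hi : p i ∈ s
    · simp only [hB, if_pos hi]
      have hi1 : ((i:ℝ) + 1) / k ≤ 1 := by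
        rw [div_le_one hkR]
        have : (i : ℕ) + 1 ≤ k := i.isLt
        exact_mod_cast this
      have hi0 : (0:ℝ) ≤ (i : ℝ) / k := by positivity
      have hsub1 : Set.Ioo ((i : ℝ) / k) (((i : ℝ) + 1) / k) ⊆
          Set.Ioo (0:ℝ) 1 ∩ Set.Ico ((i : ℝ) / k) (((i : ℝ) + 1) / k) := by
        intro ω hω
        exact ⟨⟨lt_of_le_of_lt hi0 hω.1, lt_of_lt_of_le hω.2 hi1⟩, hω.1.le, hω.2⟩
      have hdiff : ((i : ℝ) + 1) / k - (i : ℝ) / k = (k : ℝ)⁻¹ := by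
        field_simp
        ring
      have hle : volume (Set.Ioo (0:ℝ) 1 ∩ Set.Ico ((i : ℝ) / k) (((i : ℝ) + 1) / k)) ≤
          ENNReal.ofReal ((k:ℝ)⁻¹) := by
        refine le_trans (measure_mono Set.inter_subset_right) ?_
        rw [Real.volume_Ico, hdiff]
      have hge : ENNReal.ofReal ((k:ℝ)⁻¹) ≤
          volume (Set.Ioo (0:ℝ) 1 ∩ Set.Ico ((i : ℝ) / k) (((i : ℝ) + 1) / k)) := by
        refine le_trans ?_ (measure_mono hsub1)
        rw [Real.volume_Ioo, hdiff]
      rw [le_antisymm hle hge, ENNReal.ofReal_inv_of_pos hkR, ENNReal.ofReal_natCast]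
    · simp only [hB, if_neg hi]
      exact measure_empty
  simp only [hvol]
  rw [Finset.mul_sum]
  refine Finset.sum_congr rfl fun i _ => ?_
  by_cases hi : p i ∈ s <;> simp [hi, Set.indicator_apply]

/-- Identification of the lift of an empirical measure. -/
lemma isP2_emp {k : ℕ} (hk : 0 < k) (p : Fin k → V) : IsP2 (empiricalMeasure p) := by
  refine ⟨isProbabilityMeasure_emp hk p, ?_⟩
  rw [← map_stepFun hk p]
  rw [memLp_map_measure_iff (g := fun x : EuclideanSpace ℝ (Fin d) => x) aestronglyMeasurable_id (measurable_stepFun hk p).aemeasurable]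
  exact memℒp_stepFun hk p

end Empirical
section Wasserstein

variable {d : ℕ}

local notation "V" => EuclideanSpace ℝ (Fin d)

lemma integrable_dirac' {α : Type*} [MeasurableSpace α] [MeasurableSingletonClass α]
    (f : α → ℝ) (a : α) : Integrable f (Measure.dirac a) := by
  have h : (fun _ : α => f a) =ᵐ[Measure.dirac a] f := by
    rw [MeasureTheory.ae_dirac_eq]
    exact Filter.eventually_pure.2 rfl
  exact (integrable_const (f a)).congr h

lemma wassersteinDist_nonneg (r : ℝ) (μ ν : Measure V) : 0 ≤ wassersteinDist r μ ν := by
  apply Real.sInf_nonneg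
  rintro c ⟨γ, -, -, rfl⟩
  exact Real.rpow_nonneg (integral_nonneg fun p => Real.rpow_nonneg dist_nonneg _) _

lemma wassersteinDist_emp_le {r : ℝ} (hr1 : 1 ≤ r) {k : ℕ} (hk : 0 < k)
    (p q : Fin k → V) {D : ℝ} (hD : 0 ≤ D) (h : ∀ i, dist (p i) (q i) ≤ D) :
    wassersteinDist r (empiricalMeasure p) (empiricalMeasure q) ≤ D := by
  classical
  have hr0 : (0:ℝ) < r := lt_of_lt_of_le one_pos hr1
  set γ : Measure (V × V) := (k : ℝ≥0∞)⁻¹ • ∑ i, Measure.dirac (p i, q i) with hγ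
  have hfst : γ.map Prod.fst = empiricalMeasure p := by
    ext s hs
    rw [Measure.map_apply measurable_fst hs, emp_apply p hs]
    simp only [hγ, Measure.smul_apply, Measure.finset_sum_apply, smul_eq_mul]
    congr 1
    refine Finset.sum_congr rfl fun i _ => ?_
    rw [Measure.dirac_apply' _ (measurable_fst hs)]
    simp [Set.indicator_apply]
  have hsnd : γ.map Prod.snd = empiricalMeasure q := by
    ext s hs
    rw [Measure.map_apply measurable_snd hs, emp_apply q hs]
    simp only [hγ, Measure.smul_apply, Measure.finset_sum_apply, smul_eq_mul]
    congr 1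
    refine Finset.sum_congr rfl fun i _ => ?_
    rw [Measure.dirac_apply' _ (measurable_snd hs)]
    simp [Set.indicator_apply]
  have hBdd : BddBelow { c | ∃ γ : Measure (V × V),
      γ.map Prod.fst = empiricalMeasure p ∧ γ.map Prod.snd = empiricalMeasure q ∧
      c = (∫ z, dist z.1 z.2 ^ r ∂γ) ^ (1 / r) } := by
    refine ⟨0, ?_⟩
    rintro c ⟨γ', -, -, rfl⟩
    exact Real.rpow_nonneg (integral_nonneg fun z => Real.rpow_nonneg dist_nonneg _) _
  have hmem : (∫ z : V × V, dist z.1 z.2 ^ r ∂γ) ^ (1 / r) ∈ { c | ∃ γ : Measure (V × V),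
      γ.map Prod.fst = empiricalMeasure p ∧ γ.map Prod.snd = empiricalMeasure q ∧
      c = (∫ z, dist z.1 z.2 ^ r ∂γ) ^ (1 / r) } := ⟨γ, hfst, hsnd, rfl⟩
  have hint : ∫ z : V × V, dist z.1 z.2 ^ r ∂γ = (k:ℝ)⁻¹ * ∑ i, dist (p i) (q i) ^ r := by
    rw [hγ, integral_smul_measure,
      integral_finset_sum_measure (fun i _ => _root_.integrable_dirac' _ _)]
    simp only [integral_dirac]
    rw [smul_eq_mul, ENNReal.toReal_inv]
    norm_num
  have hintle : ∫ z : V × V, dist z.1 z.2 ^ r ∂γ ≤ D ^ r := by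
    rw [hint]
    have hsum : ∑ i, dist (p i) (q i) ^ r ≤ (k:ℝ) * D ^ r := by
      calc ∑ i, dist (p i) (q i) ^ r ≤ ∑ _i : Fin k, D ^ r :=
            Finset.sum_le_sum fun i _ => Real.rpow_le_rpow dist_nonneg (h i) hr0.le
        _ = (k:ℝ) * D ^ r := by
            simp [Finset.sum_const, Fintype.card_fin, nsmul_eq_mul]
    calc (k:ℝ)⁻¹ * ∑ i, dist (p i) (q i) ^ r ≤ (k:ℝ)⁻¹ * ((k:ℝ) * D ^ r) := by
          exact mul_le_mul_of_nonneg_left hsum (by positivity)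
      _ = D ^ r := by
          rw [← mul_assoc, inv_mul_cancel₀ (by exact_mod_cast hk.ne'), one_mul]
  refine le_trans (csInf_le hBdd hmem) ?_
  calc (∫ z : V × V, dist z.1 z.2 ^ r ∂γ) ^ (1 / r)
      ≤ (D ^ r) ^ (1 / r) :=
        Real.rpow_le_rpow (integral_nonneg fun z => Real.rpow_nonneg dist_nonneg _)
          hintle (by positivity)
    _ = D := by
        rw [← Real.rpow_mul hD, mul_one_div_cancel hr0.ne', Real.rpow_one]

end Wasserstein
section Phi

variable {d : ℕ} {r L : ℝ}
variable {φ : EuclideanSpace ℝ (Fin d) → Measure (EuclideanSpace ℝ (Fin d)) → ℝ}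

local notation "V" => EuclideanSpace ℝ (Fin d)

lemma phi_emp_lip (hr1 : 1 ≤ r)
    (hφ : ∀ x y : V, ∀ μ ν : Measure V, IsP2 μ → IsP2 ν →
      |φ x μ - φ y ν| ≤ L * (dist x y + wassersteinDist r μ ν))
    {k : ℕ} (hk : 0 < k) (a b : V) (p q : Fin k → V) {D : ℝ} (hD : 0 ≤ D)
    (h : ∀ i, dist (p i) (q i) ≤ D) :
    |φ a (empiricalMeasure p) - φ b (empiricalMeasure q)| ≤ |L| * (dist a b + D) := by
  have h1 := hφ a b _ _ (isP2_emp hk p) (isP2_emp hk q)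
  have hW0 := wassersteinDist_nonneg r (empiricalMeasure p) (empiricalMeasure q)
  have hWD := wassersteinDist_emp_le hr1 hk p q hD h
  have hd0 : (0:ℝ) ≤ dist a b := dist_nonneg
  calc |φ a (empiricalMeasure p) - φ b (empiricalMeasure q)|
      ≤ L * (dist a b + wassersteinDist r (empiricalMeasure p) (empiricalMeasure q)) := h1
    _ ≤ |L| * (dist a b + wassersteinDist r (empiricalMeasure p) (empiricalMeasure q)) :=
        mul_le_mul_of_nonneg_right (le_abs_self L) (by positivity)
    _ ≤ |L| * (dist a b + D) := by
        exact mul_le_mul_of_nonneg_left (by linarith) (abs_nonneg L)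

lemma phi_emp_bound (hr1 : 1 ≤ r)
    (hφ : ∀ x y : V, ∀ μ ν : Measure V, IsP2 μ → IsP2 ν →
      |φ x μ - φ y ν| ≤ L * (dist x y + wassersteinDist r μ ν))
    {k : ℕ} (hk : 0 < k) (a : V) (p : Fin k → V) {D : ℝ} (hD : 0 ≤ D)
    (h : ∀ i, ‖p i‖ ≤ D) :
    |φ a (empiricalMeasure p)| ≤
      |φ 0 (empiricalMeasure (fun _ : Fin k => (0:V)))| + |L| * (‖a‖ + D) := by
  have h1 := phi_emp_lip hr1 hφ hk a 0 p (fun _ => 0) hD (fun i => by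
    simpa [dist_eq_norm] using h i)
  rw [dist_zero_right] at h1
  have h2 : |φ a (empiricalMeasure p)| - |φ 0 (empiricalMeasure (fun _ : Fin k => (0:V)))| ≤
      |φ a (empiricalMeasure p) - φ 0 (empiricalMeasure (fun _ : Fin k => (0:V)))| :=
    abs_sub_abs_le_abs_sub _ _
  linarith

lemma phi_emp_convex
    (hconv : ∀ lam ∈ Set.Icc (0:ℝ) 1, ∀ x y : V, ∀ X Y : ℝ → V, Measurable X → Measurable Y →
      MemLp X 2 μΩ → MemLp Y 2 μΩ →
      φ (lam • x + (1 - lam) • y) (Measure.map (fun ω => lam • X ω + (1 - lam) • Y ω) μΩ) ≤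
        lam * φ x (Measure.map X μΩ) + (1 - lam) * φ y (Measure.map Y μΩ))
    {k : ℕ} (hk : 0 < k) {lam : ℝ} (hlam : lam ∈ Set.Icc (0:ℝ) 1) (a b : V)
    (p q : Fin k → V) :
    φ (lam • a + (1 - lam) • b) (empiricalMeasure fun i => lam • p i + (1 - lam) • q i) ≤
      lam * φ a (empiricalMeasure p) + (1 - lam) * φ b (empiricalMeasure q) := by
  rw [← map_stepFun hk p, ← map_stepFun hk q,
    ← map_stepFun hk (fun i => lam • p i + (1 - lam) • q i)]
  have hstep : stepFun hk (fun i => lam • p i + (1 - lam) • q i)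
      = fun ω => lam • stepFun hk p ω + (1 - lam) • stepFun hk q ω := rfl
  rw [hstep]
  exact hconv lam hlam a b _ _ (measurable_stepFun hk p) (measurable_stepFun hk q)
    (memℒp_stepFun hk p) (memℒp_stepFun hk q)

/-! ### The inner integrand -/

lemma abs_integral_le {α : Type*} [MeasurableSpace α] (μ : Measure α) (f : α → ℝ) :
    |∫ a, f a ∂μ| ≤ ∫ a, |f a| ∂μ := by
  simpa [Real.norm_eq_abs] using norm_integral_le_integral_norm (μ := μ) f

lemma measurable_prodMoll {k : ℕ} (ε : ℝ) :
    Measurable fun ys : Fin k → V => ∏ i, stdMollifier d ε (ys i) :=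
  Finset.measurable_prod _ fun i _ =>
    (measurable_stdMollifier ε).comp (measurable_pi_apply i)

lemma prodMoll_nonneg {k : ℕ} {ε : ℝ} (hε : 0 < ε) (ys : Fin k → V) :
    0 ≤ ∏ i, stdMollifier d ε (ys i) :=
  Finset.prod_nonneg fun i _ => stdMollifier_nonneg hε _

lemma measurable_phiG (hr1 : 1 ≤ r)
    (hφ : ∀ x y : V, ∀ μ ν : Measure V, IsP2 μ → IsP2 ν →
      |φ x μ - φ y ν| ≤ L * (dist x y + wassersteinDist r μ ν))
    {k : ℕ} (hk : 0 < k) (a : V) (xs : Fin k → V) :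
    Measurable fun ys : Fin k → V => φ a (empiricalMeasure fun i => xs i - ys i) := by
  have hlip : LipschitzWith (Real.toNNReal |L|)
      (fun ys : Fin k → V => φ a (empiricalMeasure fun i => xs i - ys i)) := by
    apply LipschitzWith.of_dist_le_mul
    intro ys ys'
    rw [Real.coe_toNNReal _ (abs_nonneg L), Real.dist_eq]
    have h := phi_emp_lip hr1 hφ hk a a (fun i => xs i - ys i) (fun i => xs i - ys' i)
      (dist_nonneg (x := ys) (y := ys')) (fun i => by
        rw [dist_sub_left]; exact dist_le_pi_dist ys ys' i)
    simpa [dist_self] using h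
  exact hlip.continuous.measurable

lemma G_abs_le (hr1 : 1 ≤ r)
    (hφ : ∀ x y : V, ∀ μ ν : Measure V, IsP2 μ → IsP2 ν →
      |φ x μ - φ y ν| ≤ L * (dist x y + wassersteinDist r μ ν))
    {k : ℕ} (hk : 0 < k) {ε : ℝ} (hε : 0 < ε) (hε1 : ε ≤ 1) (a : V) (xs : Fin k → V)
    (ys : Fin k → V) :
    |φ a (empiricalMeasure fun i => xs i - ys i) * ∏ i, stdMollifier d ε (ys i)| ≤
      (|φ 0 (empiricalMeasure (fun _ : Fin k => (0:V)))| +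
        |L| * (‖a‖ + (∑ i, ‖xs i‖ + 1))) * ∏ i, stdMollifier d ε (ys i) := by
  have hP : 0 ≤ ∏ i, stdMollifier d ε (ys i) := prodMoll_nonneg hε ys
  by_cases hP0 : ∏ i, stdMollifier d ε (ys i) = 0
  · simp [hP0]
  · have hys : ∀ i, ‖ys i‖ < ε := by
      intro i
      have := Finset.prod_ne_zero_iff.1 hP0 i (Finset.mem_univ i)
      exact norm_lt_of_stdMollifier_ne_zero hε this
    have hφb := phi_emp_bound hr1 hφ hk a (fun i => xs i - ys i)
      (D := ∑ i, ‖xs i‖ + 1)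
      (by positivity)
      (fun i => by
        calc ‖xs i - ys i‖ ≤ ‖xs i‖ + ‖ys i‖ := norm_sub_le _ _
          _ ≤ (∑ j, ‖xs j‖) + 1 := by
              have h1 : ‖xs i‖ ≤ ∑ j, ‖xs j‖ :=
                Finset.single_le_sum (fun j _ => norm_nonneg (xs j)) (Finset.mem_univ i)
              have h2 : ‖ys i‖ ≤ 1 := le_trans (hys i).le hε1
              linarith)
    rw [abs_mul, abs_of_nonneg hP]
    exact mul_le_mul_of_nonneg_right hφb hP

lemma integrable_G (hr1 : 1 ≤ r)
    (hφ : ∀ x y : V, ∀ μ ν : Measure V, IsP2 μ → IsP2 ν →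
      |φ x μ - φ y ν| ≤ L * (dist x y + wassersteinDist r μ ν))
    {k : ℕ} (hk : 0 < k) {ε : ℝ} (hε : 0 < ε) (hε1 : ε ≤ 1) (a : V) (xs : Fin k → V) :
    Integrable (fun ys : Fin k → V =>
        φ a (empiricalMeasure fun i => xs i - ys i) * ∏ i, stdMollifier d ε (ys i))
      (Measure.pi fun _ => (volume : Measure V)) := by
  refine Integrable.mono' ((integrable_prodMoll hε).const_mul
      (|φ 0 (empiricalMeasure (fun _ : Fin k => (0:V)))| + |L| * (‖a‖ + (∑ i, ‖xs i‖ + 1))))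
    ((measurable_phiG hr1 hφ hk a xs).mul (measurable_prodMoll ε)).aestronglyMeasurable
    (Filter.Eventually.of_forall fun ys => ?_)
  rw [Real.norm_eq_abs]
  exact G_abs_le hr1 hφ hk hε hε1 a xs ys

lemma innerInt_abs_le (hr1 : 1 ≤ r)
    (hφ : ∀ x y : V, ∀ μ ν : Measure V, IsP2 μ → IsP2 ν →
      |φ x μ - φ y ν| ≤ L * (dist x y + wassersteinDist r μ ν))
    {k : ℕ} (hk : 0 < k) {ε : ℝ} (hε : 0 < ε) (hε1 : ε ≤ 1) (a : V) (xs : Fin k → V) :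
    |∫ ys : Fin k → V, (φ a (empiricalMeasure fun i => xs i - ys i) *
        ∏ i, stdMollifier d ε (ys i)) ∂(Measure.pi fun _ => (volume : Measure V))| ≤
      (|φ 0 (empiricalMeasure (fun _ : Fin k => (0:V)))| +
        |L| * (‖a‖ + (∑ i, ‖xs i‖ + 1))) * mollConst d ε ^ k := by
  calc |∫ ys : Fin k → V, (φ a (empiricalMeasure fun i => xs i - ys i) *
        ∏ i, stdMollifier d ε (ys i)) ∂(Measure.pi fun _ => (volume : Measure V))|
      ≤ ∫ ys : Fin k → V, |φ a (empiricalMeasure fun i => xs i - ys i) *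
        ∏ i, stdMollifier d ε (ys i)| ∂(Measure.pi fun _ => (volume : Measure V)) := by
        exact abs_integral_le _ _
    _ ≤ ∫ ys : Fin k → V, ((|φ 0 (empiricalMeasure (fun _ : Fin k => (0:V)))| +
        |L| * (‖a‖ + (∑ i, ‖xs i‖ + 1))) * ∏ i, stdMollifier d ε (ys i))
          ∂(Measure.pi fun _ => (volume : Measure V)) := by
        exact integral_mono (integrable_G hr1 hφ hk hε hε1 a xs).abs
          ((integrable_prodMoll hε).const_mul _)
          (fun ys => G_abs_le hr1 hφ hk hε hε1 a xs ys)
    _ = _ := by rw [integral_const_mul, integral_prodMoll]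

lemma innerInt_sub_le (hr1 : 1 ≤ r)
    (hφ : ∀ x y : V, ∀ μ ν : Measure V, IsP2 μ → IsP2 ν →
      |φ x μ - φ y ν| ≤ L * (dist x y + wassersteinDist r μ ν))
    {k : ℕ} (hk : 0 < k) {ε : ℝ} (hε : 0 < ε) (hε1 : ε ≤ 1) (a b : V)
    (xs xs' : Fin k → V) :
    |(∫ ys : Fin k → V, (φ a (empiricalMeasure fun i => xs i - ys i) *
        ∏ i, stdMollifier d ε (ys i)) ∂(Measure.pi fun _ => (volume : Measure V))) -
      ∫ ys : Fin k → V, (φ b (empiricalMeasure fun i => xs' i - ys i) *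
        ∏ i, stdMollifier d ε (ys i)) ∂(Measure.pi fun _ => (volume : Measure V))| ≤
      |L| * (dist a b + dist xs xs') * mollConst d ε ^ k := by
  rw [← integral_sub (integrable_G hr1 hφ hk hε hε1 a xs)
    (integrable_G hr1 hφ hk hε hε1 b xs')]
  have hpt : ∀ ys : Fin k → V,
      |(φ a (empiricalMeasure fun i => xs i - ys i) * ∏ i, stdMollifier d ε (ys i)) -
        φ b (empiricalMeasure fun i => xs' i - ys i) * ∏ i, stdMollifier d ε (ys i)| ≤
      (|L| * (dist a b + dist xs xs')) * ∏ i, stdMollifier d ε (ys i) := by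
    intro ys
    rw [← sub_mul, abs_mul, abs_of_nonneg (prodMoll_nonneg hε ys)]
    refine mul_le_mul_of_nonneg_right ?_ (prodMoll_nonneg hε ys)
    exact phi_emp_lip hr1 hφ hk a b _ _ (dist_nonneg (x := xs) (y := xs'))
      (fun i => by rw [dist_sub_right]; exact dist_le_pi_dist xs xs' i)
  calc |∫ ys : Fin k → V, ((φ a (empiricalMeasure fun i => xs i - ys i) *
        ∏ i, stdMollifier d ε (ys i)) -
        φ b (empiricalMeasure fun i => xs' i - ys i) * ∏ i, stdMollifier d ε (ys i))
          ∂(Measure.pi fun _ => (volume : Measure V))|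
      ≤ ∫ ys : Fin k → V, ((|L| * (dist a b + dist xs xs')) * ∏ i, stdMollifier d ε (ys i))
          ∂(Measure.pi fun _ => (volume : Measure V)) := by
        refine le_trans (abs_integral_le _ _) ?_
        exact integral_mono
          ((integrable_G hr1 hφ hk hε hε1 a xs).sub (integrable_G hr1 hφ hk hε hε1 b xs')).abs
          ((integrable_prodMoll hε).const_mul _) hpt
    _ = _ := by rw [integral_const_mul, integral_prodMoll]

end Phi
section HLayer

variable {d : ℕ} {r L : ℝ}
variable {φ : EuclideanSpace ℝ (Fin d) → Measure (EuclideanSpace ℝ (Fin d)) → ℝ}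

local notation "V" => EuclideanSpace ℝ (Fin d)

/-- The inner integral of the mollification. -/
noncomputable def innerI (d k : ℕ) (ε : ℝ)
    (φ : EuclideanSpace ℝ (Fin d) → Measure (EuclideanSpace ℝ (Fin d)) → ℝ)
    (a : EuclideanSpace ℝ (Fin d)) (xs : Fin k → EuclideanSpace ℝ (Fin d)) : ℝ :=
  ∫ ys : Fin k → EuclideanSpace ℝ (Fin d),
    (φ a (empiricalMeasure fun i => xs i - ys i) * ∏ i, stdMollifier d ε (ys i))
    ∂(Measure.pi fun _ => (volume : Measure (EuclideanSpace ℝ (Fin d))))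

lemma mollifiedH_eq {k : ℕ} (ε : ℝ) (x : V) (xs : Fin k → V) :
    mollifiedH d k ε φ x xs = ∫ y₀, innerI d k ε φ (x - y₀) xs * stdMollifier d ε y₀ := rfl

lemma innerI_abs_le (hr1 : 1 ≤ r)
    (hφ : ∀ x y : V, ∀ μ ν : Measure V, IsP2 μ → IsP2 ν →
      |φ x μ - φ y ν| ≤ L * (dist x y + wassersteinDist r μ ν))
    {k : ℕ} (hk : 0 < k) {ε : ℝ} (hε : 0 < ε) (hε1 : ε ≤ 1) (a : V) (xs : Fin k → V) :
    |innerI d k ε φ a xs| ≤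
      (|φ 0 (empiricalMeasure (fun _ : Fin k => (0:V)))| +
        |L| * (‖a‖ + (∑ i, ‖xs i‖ + 1))) * mollConst d ε ^ k :=
  innerInt_abs_le hr1 hφ hk hε hε1 a xs

lemma innerI_sub_le (hr1 : 1 ≤ r)
    (hφ : ∀ x y : V, ∀ μ ν : Measure V, IsP2 μ → IsP2 ν →
      |φ x μ - φ y ν| ≤ L * (dist x y + wassersteinDist r μ ν))
    {k : ℕ} (hk : 0 < k) {ε : ℝ} (hε : 0 < ε) (hε1 : ε ≤ 1) (a b : V)
    (xs xs' : Fin k → V) :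
    |innerI d k ε φ a xs - innerI d k ε φ b xs'| ≤
      |L| * (dist a b + dist xs xs') * mollConst d ε ^ k :=
  innerInt_sub_le hr1 hφ hk hε hε1 a b xs xs'

lemma measurable_innerI_y0 (hr1 : 1 ≤ r)
    (hφ : ∀ x y : V, ∀ μ ν : Measure V, IsP2 μ → IsP2 ν →
      |φ x μ - φ y ν| ≤ L * (dist x y + wassersteinDist r μ ν))
    {k : ℕ} (hk : 0 < k) {ε : ℝ} (hε : 0 < ε) (hε1 : ε ≤ 1) (x : V) (xs : Fin k → V) :
    Measurable fun y₀ : V => innerI d k ε φ (x - y₀) xs := by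
  have hM : 0 ≤ mollConst d ε ^ k := pow_nonneg (mollConst_nonneg hε) k
  have hlip : LipschitzWith ((|L| * mollConst d ε ^ k).toNNReal)
      (fun y₀ : V => innerI d k ε φ (x - y₀) xs) := by
    apply LipschitzWith.of_dist_le_mul
    intro y₀ y₀'
    rw [Real.coe_toNNReal _ (by positivity), Real.dist_eq]
    calc |innerI d k ε φ (x - y₀) xs - innerI d k ε φ (x - y₀') xs|
        ≤ |L| * (dist (x - y₀) (x - y₀') + dist xs xs) * mollConst d ε ^ k :=
          innerI_sub_le hr1 hφ hk hε hε1 _ _ xs xs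
      _ = |L| * mollConst d ε ^ k * dist y₀ y₀' := by
          rw [dist_self, dist_sub_left]; ring
  exact hlip.continuous.measurable

lemma F_abs_le (hr1 : 1 ≤ r)
    (hφ : ∀ x y : V, ∀ μ ν : Measure V, IsP2 μ → IsP2 ν →
      |φ x μ - φ y ν| ≤ L * (dist x y + wassersteinDist r μ ν))
    {k : ℕ} (hk : 0 < k) {ε : ℝ} (hε : 0 < ε) (hε1 : ε ≤ 1) (x : V) (xs : Fin k → V)
    (y₀ : V) :
    |innerI d k ε φ (x - y₀) xs * stdMollifier d ε y₀| ≤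
      ((|φ 0 (empiricalMeasure (fun _ : Fin k => (0:V)))| +
        |L| * ((‖x‖ + 1) + (∑ i, ‖xs i‖ + 1))) * mollConst d ε ^ k) *
        stdMollifier d ε y₀ := by
  by_cases h0 : stdMollifier d ε y₀ = 0
  · simp [h0]
  · have hy0 : ‖y₀‖ < ε := norm_lt_of_stdMollifier_ne_zero hε h0
    have hy1 : ‖y₀‖ ≤ 1 := le_trans hy0.le hε1
    have hxy : ‖x - y₀‖ ≤ ‖x‖ + 1 := le_trans (norm_sub_le _ _) (by linarith)
    have h1 : |innerI d k ε φ (x - y₀) xs| ≤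
        ((|φ 0 (empiricalMeasure (fun _ : Fin k => (0:V)))| +
          |L| * ((‖x‖ + 1) + (∑ i, ‖xs i‖ + 1))) * mollConst d ε ^ k) := by
      refine le_trans (innerI_abs_le hr1 hφ hk hε hε1 (x - y₀) xs) ?_
      have hM : 0 ≤ mollConst d ε ^ k := pow_nonneg (mollConst_nonneg hε) k
      refine mul_le_mul_of_nonneg_right ?_ hM
      have : |L| * (‖x - y₀‖ + (∑ i, ‖xs i‖ + 1)) ≤
          |L| * ((‖x‖ + 1) + (∑ i, ‖xs i‖ + 1)) :=
        mul_le_mul_of_nonneg_left (by linarith) (abs_nonneg L)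
      linarith
    rw [abs_mul, abs_of_nonneg (stdMollifier_nonneg hε y₀)]
    exact mul_le_mul_of_nonneg_right h1 (stdMollifier_nonneg hε y₀)

lemma integrable_F (hr1 : 1 ≤ r)
    (hφ : ∀ x y : V, ∀ μ ν : Measure V, IsP2 μ → IsP2 ν →
      |φ x μ - φ y ν| ≤ L * (dist x y + wassersteinDist r μ ν))
    {k : ℕ} (hk : 0 < k) {ε : ℝ} (hε : 0 < ε) (hε1 : ε ≤ 1) (x : V) (xs : Fin k → V) :
    Integrable (fun y₀ : V => innerI d k ε φ (x - y₀) xs * stdMollifier d ε y₀)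
      (volume : Measure V) := by
  refine Integrable.mono' ((integrable_stdMollifier hε).const_mul
      ((|φ 0 (empiricalMeasure (fun _ : Fin k => (0:V)))| +
        |L| * ((‖x‖ + 1) + (∑ i, ‖xs i‖ + 1))) * mollConst d ε ^ k))
    ((measurable_innerI_y0 hr1 hφ hk hε hε1 x xs).mul
      (measurable_stdMollifier ε)).aestronglyMeasurable
    (Filter.Eventually.of_forall fun y₀ => ?_)
  rw [Real.norm_eq_abs]
  exact F_abs_le hr1 hφ hk hε hε1 x xs y₀

lemma H_abs_le (hr1 : 1 ≤ r)
    (hφ : ∀ x y : V, ∀ μ ν : Measure V, IsP2 μ → IsP2 ν →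
      |φ x μ - φ y ν| ≤ L * (dist x y + wassersteinDist r μ ν))
    {k : ℕ} (hk : 0 < k) {ε : ℝ} (hε : 0 < ε) (hε1 : ε ≤ 1) (x : V) (xs : Fin k → V) :
    |mollifiedH d k ε φ x xs| ≤
      ((|φ 0 (empiricalMeasure (fun _ : Fin k => (0:V)))| +
        |L| * ((‖x‖ + 1) + (∑ i, ‖xs i‖ + 1))) * mollConst d ε ^ k) * mollConst d ε := by
  rw [mollifiedH_eq]
  calc |∫ y₀, innerI d k ε φ (x - y₀) xs * stdMollifier d ε y₀|
      ≤ ∫ y₀, |innerI d k ε φ (x - y₀) xs * stdMollifier d ε y₀| := abs_integral_le _ _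
    _ ≤ ∫ y₀, ((|φ 0 (empiricalMeasure (fun _ : Fin k => (0:V)))| +
          |L| * ((‖x‖ + 1) + (∑ i, ‖xs i‖ + 1))) * mollConst d ε ^ k) *
          stdMollifier d ε y₀ :=
        integral_mono (integrable_F hr1 hφ hk hε hε1 x xs).abs
          ((integrable_stdMollifier hε).const_mul _)
          (fun y₀ => F_abs_le hr1 hφ hk hε hε1 x xs y₀)
    _ = _ := by rw [integral_const_mul]; rfl

lemma measurable_H_xs (hr1 : 1 ≤ r)
    (hφ : ∀ x y : V, ∀ μ ν : Measure V, IsP2 μ → IsP2 ν →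
      |φ x μ - φ y ν| ≤ L * (dist x y + wassersteinDist r μ ν))
    {k : ℕ} (hk : 0 < k) {ε : ℝ} (hε : 0 < ε) (hε1 : ε ≤ 1) (x : V) :
    Measurable fun xs : Fin k → V => mollifiedH d k ε φ x xs := by
  have hM : 0 ≤ mollConst d ε := mollConst_nonneg hε
  have hMk : 0 ≤ mollConst d ε ^ k := pow_nonneg hM k
  have hlip : LipschitzWith ((|L| * mollConst d ε ^ k * mollConst d ε).toNNReal)
      (fun xs : Fin k → V => mollifiedH d k ε φ x xs) := by
    apply LipschitzWith.of_dist_le_mul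
    intro xs xs'
    rw [Real.coe_toNNReal _ (by positivity), Real.dist_eq, mollifiedH_eq, mollifiedH_eq,
      ← integral_sub (integrable_F hr1 hφ hk hε hε1 x xs)
        (integrable_F hr1 hφ hk hε hε1 x xs')]
    have hpt : ∀ y₀ : V,
        |innerI d k ε φ (x - y₀) xs * stdMollifier d ε y₀ -
          innerI d k ε φ (x - y₀) xs' * stdMollifier d ε y₀| ≤
        (|L| * dist xs xs' * mollConst d ε ^ k) * stdMollifier d ε y₀ := by
      intro y₀
      rw [← sub_mul, abs_mul, abs_of_nonneg (stdMollifier_nonneg hε y₀)]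
      refine mul_le_mul_of_nonneg_right ?_ (stdMollifier_nonneg hε y₀)
      calc |innerI d k ε φ (x - y₀) xs - innerI d k ε φ (x - y₀) xs'|
          ≤ |L| * (dist (x - y₀) (x - y₀) + dist xs xs') * mollConst d ε ^ k :=
            innerI_sub_le hr1 hφ hk hε hε1 _ _ xs xs'
        _ = |L| * dist xs xs' * mollConst d ε ^ k := by rw [dist_self, zero_add]
    calc |∫ y₀, (innerI d k ε φ (x - y₀) xs * stdMollifier d ε y₀ -
          innerI d k ε φ (x - y₀) xs' * stdMollifier d ε y₀)|
        ≤ ∫ y₀, ((|L| * dist xs xs' * mollConst d ε ^ k) * stdMollifier d ε y₀) := by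
          refine le_trans (abs_integral_le _ _) ?_
          exact integral_mono
            ((integrable_F hr1 hφ hk hε hε1 x xs).sub
              (integrable_F hr1 hφ hk hε hε1 x xs')).abs
            ((integrable_stdMollifier hε).const_mul _) hpt
      _ = |L| * mollConst d ε ^ k * mollConst d ε * dist xs xs' := by
          rw [integral_const_mul]
          show |L| * dist xs xs' * mollConst d ε ^ k * mollConst d ε = _
          ring
  exact hlip.continuous.measurable

lemma H_convex (hr1 : 1 ≤ r)
    (hφ : ∀ x y : V, ∀ μ ν : Measure V, IsP2 μ → IsP2 ν →
      |φ x μ - φ y ν| ≤ L * (dist x y + wassersteinDist r μ ν))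
    (hconv : ∀ lam ∈ Set.Icc (0:ℝ) 1, ∀ x y : V, ∀ X Y : ℝ → V, Measurable X → Measurable Y →
      MemLp X 2 μΩ → MemLp Y 2 μΩ →
      φ (lam • x + (1 - lam) • y) (Measure.map (fun ω => lam • X ω + (1 - lam) • Y ω) μΩ) ≤
        lam * φ x (Measure.map X μΩ) + (1 - lam) * φ y (Measure.map Y μΩ))
    {k : ℕ} (hk : 0 < k) {ε : ℝ} (hε : 0 < ε) (hε1 : ε ≤ 1)
    {lam : ℝ} (hlam : lam ∈ Set.Icc (0:ℝ) 1) (a b : V) (p q : Fin k → V) :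
    mollifiedH d k ε φ (lam • a + (1 - lam) • b) (fun i => lam • p i + (1 - lam) • q i) ≤
      lam * mollifiedH d k ε φ a p + (1 - lam) * mollifiedH d k ε φ b q := by
  obtain ⟨hlam0, hlam1⟩ := hlam
  have hlam1' : 0 ≤ 1 - lam := by linarith
  -- inner-level inequality
  have hInner : ∀ y₀ : V,
      innerI d k ε φ ((lam • a + (1 - lam) • b) - y₀) (fun i => lam • p i + (1 - lam) • q i) ≤
        lam * innerI d k ε φ (a - y₀) p + (1 - lam) * innerI d k ε φ (b - y₀) q := by
    intro y₀
    have hpt : ∀ ys : Fin k → V,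
        φ ((lam • a + (1 - lam) • b) - y₀)
            (empiricalMeasure fun i => (lam • p i + (1 - lam) • q i) - ys i) *
          ∏ i, stdMollifier d ε (ys i) ≤
        lam * (φ (a - y₀) (empiricalMeasure fun i => p i - ys i) *
            ∏ i, stdMollifier d ε (ys i)) +
          (1 - lam) * (φ (b - y₀) (empiricalMeasure fun i => q i - ys i) *
            ∏ i, stdMollifier d ε (ys i)) := by
      intro ys
      have halg : (lam • a + (1 - lam) • b) - y₀ = lam • (a - y₀) + (1 - lam) • (b - y₀) := by
        module
      have halg2 : (fun i => (lam • p i + (1 - lam) • q i) - ys i) =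
          fun i => lam • (p i - ys i) + (1 - lam) • (q i - ys i) := by
        funext i; module
      have key := phi_emp_convex hconv hk ⟨hlam0, hlam1⟩ (a - y₀) (b - y₀)
        (fun i => p i - ys i) (fun i => q i - ys i)
      rw [halg, halg2]
      calc φ (lam • (a - y₀) + (1 - lam) • (b - y₀))
            (empiricalMeasure fun i => lam • (p i - ys i) + (1 - lam) • (q i - ys i)) *
            ∏ i, stdMollifier d ε (ys i)
          ≤ (lam * φ (a - y₀) (empiricalMeasure fun i => p i - ys i) +
              (1 - lam) * φ (b - y₀) (empiricalMeasure fun i => q i - ys i)) *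
              ∏ i, stdMollifier d ε (ys i) :=
            mul_le_mul_of_nonneg_right key (prodMoll_nonneg hε ys)
        _ = _ := by ring
    have hi1 := integrable_G hr1 hφ hk hε hε1 ((lam • a + (1 - lam) • b) - y₀)
      (fun i => lam • p i + (1 - lam) • q i)
    have hi2 := integrable_G hr1 hφ hk hε hε1 (a - y₀) p
    have hi3 := integrable_G hr1 hφ hk hε hε1 (b - y₀) q
    calc innerI d k ε φ ((lam • a + (1 - lam) • b) - y₀)
          (fun i => lam • p i + (1 - lam) • q i)
        ≤ ∫ ys : Fin k → V,
            (lam * (φ (a - y₀) (empiricalMeasure fun i => p i - ys i) *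
              ∏ i, stdMollifier d ε (ys i)) +
            (1 - lam) * (φ (b - y₀) (empiricalMeasure fun i => q i - ys i) *
              ∏ i, stdMollifier d ε (ys i)))
            ∂(Measure.pi fun _ => (volume : Measure V)) :=
          integral_mono hi1 ((hi2.const_mul lam).add (hi3.const_mul (1 - lam))) hpt
      _ = lam * innerI d k ε φ (a - y₀) p + (1 - lam) * innerI d k ε φ (b - y₀) q := by
          rw [integral_add (hi2.const_mul lam) (hi3.const_mul (1 - lam)),
            integral_const_mul, integral_const_mul]
          rfl
  -- outer level
  have hF1 := integrable_F hr1 hφ hk hε hε1 (lam • a + (1 - lam) • b)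
    (fun i => lam • p i + (1 - lam) • q i)
  have hF2 := integrable_F hr1 hφ hk hε hε1 a p
  have hF3 := integrable_F hr1 hφ hk hε hε1 b q
  rw [mollifiedH_eq, mollifiedH_eq, mollifiedH_eq]
  calc ∫ y₀, innerI d k ε φ ((lam • a + (1 - lam) • b) - y₀)
        (fun i => lam • p i + (1 - lam) • q i) * stdMollifier d ε y₀
      ≤ ∫ y₀, (lam * (innerI d k ε φ (a - y₀) p * stdMollifier d ε y₀) +
          (1 - lam) * (innerI d k ε φ (b - y₀) q * stdMollifier d ε y₀)) := by
        refine integral_mono hF1 ((hF2.const_mul lam).add (hF3.const_mul (1 - lam)))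
          (fun y₀ => ?_)
        calc innerI d k ε φ ((lam • a + (1 - lam) • b) - y₀)
              (fun i => lam • p i + (1 - lam) • q i) * stdMollifier d ε y₀
            ≤ (lam * innerI d k ε φ (a - y₀) p + (1 - lam) * innerI d k ε φ (b - y₀) q) *
                stdMollifier d ε y₀ :=
              mul_le_mul_of_nonneg_right (hInner y₀) (stdMollifier_nonneg hε y₀)
          _ = _ := by ring
    _ = _ := by
        rw [integral_add (hF2.const_mul lam) (hF3.const_mul (1 - lam)),
          integral_const_mul, integral_const_mul]

end HLayer
section Assembly

variable {d : ℕ}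

local notation "V" => EuclideanSpace ℝ (Fin d)

lemma map_eval_pi {α : Type*} [MeasurableSpace α] (μ : Measure α) [IsProbabilityMeasure μ]
    {k : ℕ} (i : Fin k) :
    Measure.map (fun ω : Fin k → α => ω i) (Measure.pi fun _ => μ) = μ := by
  classical
  ext s hs
  rw [Measure.map_apply (measurable_pi_apply i) hs]
  have hpre : (fun ω : Fin k → α => ω i) ⁻¹' s =
      Set.pi Set.univ (Function.update (fun _ : Fin k => (Set.univ : Set α)) i s) := by
    exact Set.eval_preimage
  rw [hpre, Measure.pi_pi]
  rw [Finset.prod_eq_single i (fun j _ hj => by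
    rw [Function.update_of_ne hj]; exact measure_univ) (fun h => absurd (Finset.mem_univ i) h),
    Function.update_self]

lemma integrable_eval_pi {α : Type*} [MeasurableSpace α] {μ : Measure α}
    [IsProbabilityMeasure μ] {k : ℕ} (i : Fin k) {g : α → ℝ} (hgm : Measurable g)
    (hg : Integrable g μ) :
    Integrable (fun ω : Fin k → α => g (ω i)) (Measure.pi fun _ => μ) := by
  have h := (integrable_map_measure (μ := Measure.pi fun _ : Fin k => μ)
      (f := fun ω : Fin k → α => ω i) (g := g)
      (by rw [map_eval_pi]; exact hgm.aestronglyMeasurable)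
      (measurable_pi_apply i).aemeasurable).1
  rw [map_eval_pi] at h
  exact h hg

end Assembly
/-- In the mollification scheme `φ_k` of a Lipschitz function
`φ : ℝ^d × P₂(ℝ^d) → ℝ`, if the lift `φ̃(x,X) := φ(x, X_# L¹)` is convex on
`ℝ^d × E` (`E = L²((0,1);ℝ^d)`), then the lift of `φ_k` is convex on `ℝ^d × E`
for every `k`. -/
theorem mollifiedApprox_lift_convex
    (d : ℕ) (r : ℝ) (hr1 : 1 ≤ r) (hr2 : r ≤ 2)
    (φ : EuclideanSpace ℝ (Fin d) → Measure (EuclideanSpace ℝ (Fin d)) → ℝ) (L : ℝ)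
    (hφ : ∀ x y : EuclideanSpace ℝ (Fin d),
      ∀ μ ν : Measure (EuclideanSpace ℝ (Fin d)), IsP2 μ → IsP2 ν →
      |φ x μ - φ y ν| ≤ L * (dist x y + wassersteinDist r μ ν))
    (hconv : ∀ lam ∈ Set.Icc (0:ℝ) 1, ∀ x y : EuclideanSpace ℝ (Fin d),
      ∀ X Y : ℝ → EuclideanSpace ℝ (Fin d), Measurable X → Measurable Y →
      MemLp X 2 μΩ → MemLp Y 2 μΩ →
      φ (lam • x + (1 - lam) • y)
          (Measure.map (fun ω => lam • X ω + (1 - lam) • Y ω) μΩ) ≤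
        lam * φ x (Measure.map X μΩ) + (1 - lam) * φ y (Measure.map Y μΩ)) :
    ∀ k : ℕ, 0 < k →
    ∀ lam ∈ Set.Icc (0:ℝ) 1, ∀ x y : EuclideanSpace ℝ (Fin d),
      ∀ X Y : ℝ → EuclideanSpace ℝ (Fin d), Measurable X → Measurable Y →
      MemLp X 2 μΩ → MemLp Y 2 μΩ →
      mollifiedApprox d k φ (lam • x + (1 - lam) • y)
          (Measure.map (fun ω => lam • X ω + (1 - lam) • Y ω) μΩ) ≤
        lam * mollifiedApprox d k φ x (Measure.map X μΩ) +
          (1 - lam) * mollifiedApprox d k φ y (Measure.map Y μΩ) := by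
  intro k hk lam hlam x y X Y hX hY hX2 hY2
  have hkR : (0:ℝ) < k := by exact_mod_cast hk
  have hε : (0:ℝ) < 1 / k := by positivity
  have hε1 : (1:ℝ) / k ≤ 1 := by
    rw [div_le_one hkR]; exact_mod_cast hk
  set Z : ℝ → EuclideanSpace ℝ (Fin d) := fun ω => lam • X ω + (1 - lam) • Y ω with hZdef
  have hZ : Measurable Z := (hX.const_smul lam).add (hY.const_smul (1 - lam))
  have hZ2 : MemLp Z 2 μΩ := (hX2.const_smul lam).add (hY2.const_smul (1 - lam))
  -- rewrite each `mollifiedApprox` as an integral over `(pi μΩ)`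
  have hrw : ∀ (W : ℝ → EuclideanSpace ℝ (Fin d)), Measurable W →
      ∀ v : EuclideanSpace ℝ (Fin d),
      mollifiedApprox d k φ v (Measure.map W μΩ) =
        ∫ ω : Fin k → ℝ, mollifiedH d k (1 / k) φ v (fun i => W (ω i))
          ∂(Measure.pi fun _ => μΩ) := by
    intro W hW v
    haveI : IsProbabilityMeasure (Measure.map W μΩ) :=
      Measure.isProbabilityMeasure_map hW.aemeasurable
    have hpi : (Measure.pi fun _ : Fin k => Measure.map W μΩ) =
        Measure.map (fun ω : Fin k → ℝ => fun i => W (ω i))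
          (Measure.pi fun _ : Fin k => μΩ) :=
      ((measurePreserving_pi (fun _ : Fin k => μΩ) (fun _ => Measure.map W μΩ)
        (fun _ => ⟨hW, rfl⟩)).map_eq).symm
    simp only [mollifiedApprox]
    rw [hpi]
    have hcomp : Measurable (fun ω : Fin k → ℝ => fun i : Fin k => W (ω i)) :=
      measurable_pi_lambda _ fun i => hW.comp (measurable_pi_apply i)
    exact integral_map hcomp.aemeasurable
      (measurable_H_xs hr1 hφ hk hε hε1 v).aestronglyMeasurable
  -- integrability of the lifted integrands
  have hint : ∀ (W : ℝ → EuclideanSpace ℝ (Fin d)), Measurable W → MemLp W 2 μΩ →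
      ∀ v : EuclideanSpace ℝ (Fin d),
      Integrable (fun ω : Fin k → ℝ => mollifiedH d k (1 / k) φ v (fun i => W (ω i)))
        (Measure.pi fun _ => μΩ) := by
    intro W hW hW2 v
    have hWnorm : Integrable (fun t => ‖W t‖) μΩ :=
      (memLp_one_iff_integrable.1 (hW2.mono_exponent (by norm_num))).norm
    have hg : Integrable (fun ω : Fin k → ℝ =>
        (|φ 0 (empiricalMeasure (fun _ : Fin k => (0:EuclideanSpace ℝ (Fin d))))| +
            |L| * (‖v‖ + 2)) * (mollConst d (1 / k) ^ k * mollConst d (1 / k)) +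
          (|L| * (mollConst d (1 / k) ^ k * mollConst d (1 / k))) * ∑ i, ‖W (ω i)‖)
        (Measure.pi fun _ => μΩ) := by
      refine (integrable_const _).add (Integrable.const_mul ?_ _)
      exact integrable_finset_sum _ (fun i _ => integrable_eval_pi i hW.norm hWnorm)
    have hcomp : Measurable (fun ω : Fin k → ℝ => fun i : Fin k => W (ω i)) :=
      measurable_pi_lambda _ fun i => hW.comp (measurable_pi_apply i)
    refine hg.mono' ((measurable_H_xs hr1 hφ hk hε hε1 v).comp hcomp).aestronglyMeasurable
      (Filter.Eventually.of_forall fun ω => ?_)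
    rw [Real.norm_eq_abs]
    refine le_trans (H_abs_le hr1 hφ hk hε hε1 v (fun i => W (ω i))) (le_of_eq ?_)
    ring
  -- pointwise convexity of the lifted `mollifiedH`
  have hpt : ∀ ω : Fin k → ℝ,
      mollifiedH d k (1 / k) φ (lam • x + (1 - lam) • y) (fun i => Z (ω i)) ≤
        lam * mollifiedH d k (1 / k) φ x (fun i => X (ω i)) +
          (1 - lam) * mollifiedH d k (1 / k) φ y (fun i => Y (ω i)) := fun ω =>
    H_convex hr1 hφ hconv hk hε hε1 hlam x y (fun i => X (ω i)) (fun i => Y (ω i))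
  rw [hrw X hX x, hrw Y hY y, hrw Z hZ (lam • x + (1 - lam) • y)]
  calc ∫ ω : Fin k → ℝ, mollifiedH d k (1 / k) φ (lam • x + (1 - lam) • y)
        (fun i => Z (ω i)) ∂(Measure.pi fun _ => μΩ)
      ≤ ∫ ω : Fin k → ℝ, (lam * mollifiedH d k (1 / k) φ x (fun i => X (ω i)) +
          (1 - lam) * mollifiedH d k (1 / k) φ y (fun i => Y (ω i)))
          ∂(Measure.pi fun _ => μΩ) :=
        integral_mono (hint Z hZ hZ2 _) (((hint X hX hX2 x).const_mul lam).add
          ((hint Y hY hY2 y).const_mul (1 - lam))) hpt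
    _ = _ := by
        rw [integral_add ((hint X hX hX2 x).const_mul lam)
          ((hint Y hY hY2 y).const_mul (1 - lam)), integral_const_mul, integral_const_mul]
end
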